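/- arXiv:1701.01656 — 7 statements merged into one kernel-verified Lean document; each statement's English description precedes it below -/
import Mathlib

section
/- Let n ≥ 2. For every decorated tree (T,σ) ∈ D_{n−1} and every parameter triple (k,l,x) ∈ P_n, the pair h_n((T,σ),(k,l,x)) = (T′,σ′) is again a decorated tree, i.e. it belongs to D_n: T′ is a rooted labeled tree on [n] and σ′ is a stamp history for T′. -/
/-!
Robin-Hood pruning: the deterministic pruning map `h` is well defined.

Conventions: a rooted labeled tree on `[n]` is encoded on `Fin n` by a root `r` and a
parent map `p` with `p r = r` and every vertex reaching the root by iterating `p`.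
Stamps are 0-based: the paper's stamp of a vertex `v` is `(σ v : ℕ) + 1`; the paper's
parameters `k, l` are kept 1-based (as natural numbers), and `x i` stands for the paper's
`x_{i+1}`.  The pruning maps a decorated tree on `n + 1` vertices (the paper's `n - 1 ≥ 1`
vertices) to one on `n + 2` vertices, the new vertex being `Fin.last (n+1)`.
-/

/-- `(r, p)` encodes a rooted labeled tree on `Fin N`. -/
def IsRootedTree {N : ℕ} (r : Fin N) (p : Fin N → Fin N) : Prop :=
  p r = r ∧ ∀ v : Fin N, ∃ k : ℕ, p^[k] v = r

/-- `σ` is a stamp history for the tree `(r, p)`: stamps strictly increase away from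
the root. -/
def IsStampHistory {N : ℕ} (r : Fin N) (p : Fin N → Fin N) (σ : Equiv.Perm (Fin N)) : Prop :=
  ∀ v : Fin N, v ≠ r → σ (p v) < σ v

/-- Membership in the parameter set `P_{N+1}` for pruning a tree on `N` vertices:
either `1 ≤ l < k ≤ N + 1`, or `k = 1`, `l = 0` and `x_1 = 1`. -/
def PMem {N : ℕ} (k l : ℕ) (x : Fin N → Bool) : Prop :=
  (1 ≤ l ∧ l < k ∧ k ≤ N + 1) ∨ (k = 1 ∧ l = 0 ∧ ∀ h : 0 < N, x ⟨0, h⟩ = true)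

/-- The root of the pruned tree: the new vertex if `k = 1`, otherwise the old root. -/
def hRoot {n : ℕ} (r : Fin (n + 1)) (k : ℕ) : Fin (n + 2) :=
  if k = 1 then Fin.last (n + 1) else r.castSucc

/-- The parent map of the pruned tree: vertices `v` with `x_{σ(v)} = 1` and `σ(v) ≥ k`
are rewired to the new vertex; the new vertex attaches to the vertex with stamp `l`
(if `k > 1`), and all other vertices keep their parent. -/
def hParent {n : ℕ} (r : Fin (n + 1)) (p : Fin (n + 1) → Fin (n + 1))
    (σ : Equiv.Perm (Fin (n + 1))) (k l : ℕ) (x : Fin (n + 1) → Bool) :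
    Fin (n + 2) → Fin (n + 2) := fun v =>
  if hv : v = Fin.last (n + 1) then
    if k = 1 then Fin.last (n + 1) else (σ.symm (Fin.ofNat (n + 1) (l - 1 : ℕ))).castSucc
  else
    (if x (σ (v.castPred hv)) = true ∧ k ≤ (σ (v.castPred hv) : ℕ) + 1 then Fin.last (n + 1)
     else (p (v.castPred hv)).castSucc)

/-- The stamp history of the pruned tree: the new vertex gets stamp `k`, and the old
stamps `≥ k` are shifted up by one. -/
def hStamp {n : ℕ} (σ : Equiv.Perm (Fin (n + 1))) (k : ℕ) : Equiv.Perm (Fin (n + 2)) :=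
  (finSuccEquiv' (Fin.last (n + 1))).trans
    ((Equiv.optionCongr σ).trans (finSuccEquiv' (Fin.ofNat (n + 2) (k - 1 : ℕ))).symm)

/-!
Along any parent chain the stamps strictly decrease, so a stamp history alone forces every
vertex to reach the root, and the root to carry the smallest stamp. It therefore suffices to
check that `hStamp σ k` is a stamp history for the pruned parent map. The new vertex gets
stamp `k` and sits above its parent, whose stamp `l` is smaller and unshifted; a rewired
vertex has old stamp `≥ k`, hence new stamp `> k`; every other edge is an old edge, and
shifting stamps is monotone. The root is rewired only when `k = 1`, where `x_1 = 1` ensures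
that it is.
-/

namespace IsStampHistory

variable {N : ℕ} {r : Fin N} {p : Fin N → Fin N} {σ : Equiv.Perm (Fin N)}

theorem exists_iterate_eq_root (hσ : IsStampHistory r p σ) (v : Fin N) :
    ∃ m, p^[m] v = r := by
  induction hs : (σ v : ℕ) using Nat.strong_induction_on generalizing v with
  | _ s ih =>
    by_cases hv : v = r
    · exact ⟨0, hv⟩
    · obtain ⟨m, hm⟩ := ih _ (hs ▸ hσ v hv) (p v) rfl
      exact ⟨m + 1, hm⟩

theorem isRootedTree (hσ : IsStampHistory r p σ) (hr : p r = r) : IsRootedTree r p :=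
  ⟨hr, hσ.exists_iterate_eq_root⟩

theorem apply_root_eq_zero {r : Fin (N + 1)} {p : Fin (N + 1) → Fin (N + 1)}
    {σ : Equiv.Perm (Fin (N + 1))} (hσ : IsStampHistory r p σ) : σ r = 0 := by
  by_contra h
  have hr : σ.symm 0 ≠ r := fun h' => h (by rw [← h', Equiv.apply_symm_apply])
  simpa using hσ _ hr

end IsStampHistory

section Pruning

variable {n : ℕ} {r : Fin (n + 1)} {p : Fin (n + 1) → Fin (n + 1)}
  {σ : Equiv.Perm (Fin (n + 1))} {k l : ℕ} {x : Fin (n + 1) → Bool}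

theorem hRoot_of_ne_one (hk : k ≠ 1) : hRoot r k = r.castSucc := if_neg hk

theorem hStamp_last : hStamp σ k (Fin.last (n + 1)) = Fin.ofNat (n + 2) (k - 1) := by
  simp [hStamp]

theorem hStamp_castSucc (u : Fin (n + 1)) :
    hStamp σ k u.castSucc = (Fin.ofNat (n + 2) (k - 1)).succAbove (σ u) := by
  simp [hStamp, ← Fin.succAbove_last]

theorem hParent_last_of_ne_one (hk : k ≠ 1) :
    hParent r p σ k l x (Fin.last (n + 1)) = (σ.symm (Fin.ofNat (n + 1) (l - 1))).castSucc := by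
  simp [hParent, hk]

theorem hParent_castSucc (u : Fin (n + 1)) :
    hParent r p σ k l x u.castSucc =
      if x (σ u) = true ∧ k ≤ (σ u : ℕ) + 1 then Fin.last (n + 1) else (p u).castSucc := by
  simp only [hParent, dif_neg (Fin.castSucc_ne_last u), Fin.castPred_castSucc]
  rfl

theorem hParent_hRoot (hr : p r = r) (hσr : σ r = 0) (hk : 1 ≤ k) :
    hParent r p σ k l x (hRoot r k) = hRoot r k := by
  by_cases hk1 : k = 1
  · simp [hRoot, hParent, hk1]
  · have hkeep : ¬(x (σ r) = true ∧ k ≤ (σ r : ℕ) + 1) := fun h => by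
      rw [hσr, Fin.val_zero] at h
      omega
    rw [hRoot_of_ne_one hk1, hParent_castSucc, if_neg hkeep, hr]

theorem hStamp_hParent_last_lt (hl : 1 ≤ l) (hlk : l < k) (hk : k ≤ n + 2) :
    hStamp σ k (hParent r p σ k l x (Fin.last (n + 1))) < hStamp σ k (Fin.last (n + 1)) := by
  rw [hParent_last_of_ne_one (by omega), hStamp_castSucc, hStamp_last,
    Equiv.apply_symm_apply, Fin.succAbove_lt_iff_castSucc_lt, Fin.lt_def]
  simp only [Fin.val_castSucc, Fin.val_ofNat]
  rw [Nat.mod_eq_of_lt (by omega), Nat.mod_eq_of_lt (by omega)]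
  omega

theorem hStamp_hParent_castSucc_lt (hσ : IsStampHistory r p σ) (u : Fin (n + 1))
    (hu : u = r → x (σ u) = true ∧ k ≤ (σ u : ℕ) + 1) :
    hStamp σ k (hParent r p σ k l x u.castSucc) < hStamp σ k u.castSucc := by
  rw [hParent_castSucc]
  split_ifs with hC
  · rw [hStamp_last, hStamp_castSucc, Fin.lt_succAbove_iff_le_castSucc, Fin.le_def,
      Fin.val_castSucc, Fin.val_ofNat]
    exact (Nat.mod_le _ _).trans (by omega)
  · rw [hStamp_castSucc, hStamp_castSucc]
    exact Fin.strictMono_succAbove _ (hσ u fun h => hC (hu h))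

end Pruning

/-- Lemma: the Robin-Hood pruning is well defined.
For every decorated tree `(T, σ) ∈ D_{n-1}` (on `n + 1` vertices here) and every
parameter triple `(k, l, x) ∈ P_n`, the output of the deterministic pruning is again a
decorated tree: the pruned pair is a rooted labeled tree on `n + 2` vertices and the
adjusted permutation is a stamp history for it. -/
theorem robinHood_pruning_wellDefined (n : ℕ)
    (r : Fin (n + 1)) (p : Fin (n + 1) → Fin (n + 1)) (σ : Equiv.Perm (Fin (n + 1)))
    (k l : ℕ) (x : Fin (n + 1) → Bool)
    (hT : IsRootedTree r p) (hσ : IsStampHistory r p σ) (hP : PMem k l x) :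
    IsRootedTree (hRoot r k) (hParent r p σ k l x) ∧
      IsStampHistory (hRoot r k) (hParent r p σ k l x) (hStamp σ k) := by
  have hσr : σ r = 0 := hσ.apply_root_eq_zero
  have hk : 1 ≤ k := by rcases hP with ⟨hl, hlk, -⟩ | ⟨rfl, -⟩ <;> omega
  have hSH : IsStampHistory (hRoot r k) (hParent r p σ k l x) (hStamp σ k) := by
    intro v hv
    induction v using Fin.lastCases with
    | last =>
      have hk1 : k ≠ 1 := fun hk1 => hv (by simp [hRoot, hk1])
      obtain ⟨hl, hlk, hkn⟩ : 1 ≤ l ∧ l < k ∧ k ≤ n + 2 := by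
        rcases hP with ⟨hl, hlk, hkn⟩ | ⟨rfl, -⟩ <;> omega
      exact hStamp_hParent_last_lt hl hlk hkn
    | cast u =>
      refine hStamp_hParent_castSucc_lt hσ u fun hur => ?_
      subst hur
      rcases hP with ⟨hl, hlk, -⟩ | ⟨rfl, -, hx⟩
      · exact (hv (hRoot_of_ne_one (by omega)).symm).elim
      · rw [hσr]
        exact ⟨hx _, by simp⟩
  exact ⟨hSH.isRootedTree (hParent_hRoot hT.1 hσr hk), hSH⟩
end

section
/- For every c ∈ (0,2) there exist α > 0 with α < (1 − c + √(1 + 2c − c²))/4 (a quantity which is < 1) and a constant C > 0 such that for all n, all integers m with 0 < m < c·ln n, and all distinct vertices v, w ∈ [n]: P(D(v) ≥ m and D(w) ≥ m) ≤ P(D(v) ≥ m)·P(D(w) ≥ m) + C·2^{−2m}·n^{−α}. -/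
/-!
Tail bound for the degree of a fixed vertex in a random recursive tree.

The random recursive tree on `[n]` is encoded by the type `RecTree n` of sequences of
independent uniform parent choices: for `j : Fin (n-1)`, the (0-based) vertex `j + 1`
chooses its parent `t j` uniformly in `{0, …, j}`.  Since each coordinate is uniform and
independent, the law of the random recursive tree is the uniform distribution on
`RecTree n`, and probabilities are ratios of cardinalities.
-/

/-- Parent choice sequences encoding recursive trees on `n` (0-based) vertices. -/
abbrev RecTree (n : ℕ) := ∀ j : Fin (n - 1), Fin ((j : ℕ) + 1)

/-- The degree (number of children) of vertex `i` in the recursive tree `t`. -/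
noncomputable def rDeg {n : ℕ} (t : RecTree n) (i : Fin n) : ℕ :=
  Nat.card {j : Fin (n - 1) // ((t j : ℕ)) = (i : ℕ)}

/-- The probability of an event under the law of the random recursive tree on `n`
vertices (the uniform distribution on `RecTree n`). -/
noncomputable def rProb (n : ℕ) (s : Set (RecTree n)) : ℝ :=
  (Nat.card {t : RecTree n // t ∈ s} : ℝ) / (Nat.card (RecTree n) : ℝ)


/-- The sample space of a uniformly random decorated tree: a recursive tree together
with an independent uniform relabeling permutation. -/
abbrev DecSpace (n : ℕ) := RecTree n × Equiv.Perm (Fin n)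

/-- The degree of vertex `v` in a uniformly random decorated tree:
`D(v) = d_{R_n}(σ(v))`. -/
noncomputable def relDeg {n : ℕ} (p : DecSpace n) (v : Fin n) : ℕ := rDeg p.1 (p.2 v)

/-- Probability of an event for a uniformly random decorated tree (uniform measure on
`DecSpace n`). -/
noncomputable def dProb (n : ℕ) (s : Set (DecSpace n)) : ℝ :=
  (Nat.card {p : DecSpace n // p ∈ s} : ℝ) / (Nat.card (DecSpace n) : ℝ)

/-!
The degree of vertex `i` is `∑ⱼ 1[Pⱼ = i]`, a sum of functions of independent coordinates, and
for `i ≠ j` the summands of the degrees of `i` and `j` have disjoint supports.  Such sums are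
negatively associated: conditioning on the first coordinate, a large value of one sum forces the
other summand to vanish, so the two conditional tail counts antivary and Chebyshev's sum
inequality closes an induction on the number of coordinates.  The relabelling by a uniform
permutation then averages `f i = P(d(i) ≥ m)` over a uniform pair of distinct vertices, and
`∑_{i ≠ j} fᵢ fⱼ ≤ (1 - 1/n) (∑ fᵢ)²` keeps the correlation non-positive.  So the bound holds
with no error term at all.
-/

lemma Nat.card_prod_eq_sum_card_preimage_mk {A B : Type*} [Fintype A] [Finite B]
    (s : Set (A × B)) : Nat.card s = ∑ a, Nat.card (Prod.mk a ⁻¹' s) := by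
  rw [← Nat.card_sigma]
  exact Nat.card_congr (Equiv.subtypeProdEquivSigmaSubtype fun a b => (a, b) ∈ s)

lemma Nat.card_prod_eq_sum_card_preimage_mk_right {A B : Type*} [Finite A] [Fintype B]
    (s : Set (A × B)) : Nat.card s = ∑ b, Nat.card ((·, b) ⁻¹' s) := by
  rw [← Nat.card_sigma]
  exact Nat.card_congr (((Equiv.prodComm A B).subtypeEquiv fun _ => Iff.rfl).trans
    (Equiv.subtypeProdEquivSigmaSubtype fun b a => (a, b) ∈ s))

section NegativeAssociation

variable {N : ℕ} {α : Fin N → Type*}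

def sumGE (u : ∀ k, α k → ℕ) (m : ℤ) : Set (∀ k, α k) :=
  {t | m ≤ ∑ k, (u k (t k) : ℤ)}

lemma sumGE_anti (u : ∀ k, α k → ℕ) {μ₁ μ₂ : ℤ} (h : μ₁ ≤ μ₂) : sumGE u μ₂ ⊆ sumGE u μ₁ :=
  fun _ ht => h.trans ht

lemma cons_preimage_sumGE {α : Fin (N + 1) → Type*} (u : ∀ k, α k → ℕ) (m : ℤ) (a : α 0) :
    Fin.cons a ⁻¹' sumGE u m = sumGE (fun k => u k.succ) (m - u 0 a) := by
  ext t
  simp [sumGE, Fin.sum_univ_succ, add_comm]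

lemma Nat.card_pi_eq_sum_card_preimage_cons {α : Fin (N + 1) → Type*} [∀ k, Fintype (α k)]
    (s : Set (∀ k, α k)) :
    Nat.card s = ∑ a : α 0, Nat.card (Fin.cons a ⁻¹' s : Set (∀ k : Fin N, α k.succ)) := by
  rw [← Nat.card_congr ((Fin.consEquiv α).subtypeEquiv fun _ => Iff.rfl :
    (Fin.consEquiv α ⁻¹' s : Set _) ≃ s), Nat.card_prod_eq_sum_card_preimage_mk]
  rfl

theorem card_sumGE_inter_mul_card_le [∀ k, Fintype (α k)] (u v : ∀ k, α k → ℕ)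
    (huv : ∀ k a, u k a = 0 ∨ v k a = 0) (m m' : ℤ) :
    Nat.card ↥(sumGE u m ∩ sumGE v m') * Nat.card (∀ k, α k) ≤
      Nat.card (sumGE u m) * Nat.card (sumGE v m') := by
  induction N generalizing m m' with
  | zero =>
    rw [Nat.card_unique (α := ∀ k, α k), mul_one]
    exact (Nat.le_mul_self _).trans <| Nat.mul_le_mul
      (Nat.card_mono (Set.toFinite _) Set.inter_subset_left)
      (Nat.card_mono (Set.toFinite _) Set.inter_subset_right)
  | succ N ih =>
    set u' : ∀ k : Fin N, α k.succ → ℕ := fun k => u k.succ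
    set v' : ∀ k : Fin N, α k.succ → ℕ := fun k => v k.succ
    set F : α 0 → ℕ := fun a => Nat.card (sumGE u' (m - u 0 a))
    set G : α 0 → ℕ := fun a => Nat.card (sumGE v' (m' - v 0 a))
    have hF : Nat.card (sumGE u m) = ∑ a, F a := by
      simp only [Nat.card_pi_eq_sum_card_preimage_cons, cons_preimage_sumGE, F, u']
    have hG : Nat.card (sumGE v m') = ∑ a, G a := by
      simp only [Nat.card_pi_eq_sum_card_preimage_cons, cons_preimage_sumGE, G, v']
    have hFG : Nat.card ↥(sumGE u m ∩ sumGE v m') =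
        ∑ a, Nat.card ↥(sumGE u' (m - u 0 a) ∩ sumGE v' (m' - v 0 a)) := by
      simp only [Nat.card_pi_eq_sum_card_preimage_cons, Set.preimage_inter, cons_preimage_sumGE,
        u', v']
    have hcard : Nat.card (∀ k, α k) = Fintype.card (α 0) * Nat.card (∀ k : Fin N, α k.succ) := by
      rw [← Nat.card_congr (Fin.consEquiv α), Nat.card_prod, Nat.card_eq_fintype_card]
    -- `G a < G b` forces `v 0 b ≠ 0`, hence `u 0 b = 0`, so `F b` is the least value of `F`.
    have hanti : Antivary F G := by
      intro a b hab
      have hv : v 0 b ≠ 0 := by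
        rintro hb
        refine hab.not_ge (Nat.card_mono (Set.toFinite _) (sumGE_anti v' ?_))
        simp [hb]
      have hu : u 0 b = 0 := (huv 0 b).resolve_right hv
      exact Nat.card_mono (Set.toFinite _) (sumGE_anti u' (by simp [hu]))
    calc Nat.card ↥(sumGE u m ∩ sumGE v m') * Nat.card (∀ k, α k)
        = Fintype.card (α 0) * ∑ a, Nat.card ↥(sumGE u' (m - u 0 a) ∩ sumGE v' (m' - v 0 a)) *
            Nat.card (∀ k : Fin N, α k.succ) := by
          rw [hFG, hcard, Finset.sum_mul, Finset.mul_sum]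
          exact Finset.sum_congr rfl fun a _ => by ring
      _ ≤ Fintype.card (α 0) * ∑ a, F a * G a :=
          Nat.mul_le_mul_left _ <| Finset.sum_le_sum fun a _ =>
            ih u' v' (fun k => huv k.succ) _ _
      _ ≤ Nat.card (sumGE u m) * Nat.card (sumGE v m') := by
          rw [hF, hG]
          exact hanti.card_mul_sum_le_sum_mul_sum

end NegativeAssociation

lemma setOf_le_rDeg_eq_sumGE {n : ℕ} (m : ℕ) (i : Fin n) :
    {t : RecTree n | m ≤ rDeg t i} =
      sumGE (α := fun j : Fin (n - 1) => Fin (j + 1))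
        (fun _ a => if (a : ℕ) = i then 1 else 0) m := by
  ext t
  simp only [sumGE, Set.mem_ofPred_eq, rDeg, Nat.card_eq_fintype_card, Fintype.card_subtype,
    Finset.card_filter]
  exact_mod_cast Iff.rfl

theorem card_le_rDeg_and_le_rDeg_mul_card_le {n : ℕ} (m : ℕ) {i j : Fin n} (hij : i ≠ j) :
    Nat.card {t : RecTree n | m ≤ rDeg t i ∧ m ≤ rDeg t j} * Nat.card (RecTree n) ≤
      Nat.card {t : RecTree n | m ≤ rDeg t i} * Nat.card {t : RecTree n | m ≤ rDeg t j} := by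
  rw [Set.ofPred_and, setOf_le_rDeg_eq_sumGE, setOf_le_rDeg_eq_sumGE]
  refine card_sumGE_inter_mul_card_le _ _ (fun _ a => ?_) _ _
  by_cases ha : (a : ℕ) = i
  · exact .inr (if_neg fun h => hij (Fin.ext (ha.symm.trans h)))
  · exact .inl (if_neg ha)

section Perm

open Equiv

variable {ι R : Type*} [Fintype ι] [DecidableEq ι]

lemma sum_perm_apply_eq [AddCommMonoid R] (F : ι → R) (v w : ι) :
    ∑ σ : Perm ι, F (σ v) = ∑ σ : Perm ι, F (σ w) := by
  rw [← Equiv.sum_comp (Equiv.mulRight (swap v w))]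
  simp [Perm.mul_apply]

lemma sum_perm_apply_apply_eq_of_ne [AddCommMonoid R] (F : ι → ι → R) {v w x : ι}
    (hwv : w ≠ v) (hxv : x ≠ v) :
    ∑ σ : Perm ι, F (σ v) (σ x) = ∑ σ : Perm ι, F (σ v) (σ w) := by
  rw [← Equiv.sum_comp (Equiv.mulRight (swap w x))]
  simp [Perm.mul_apply, swap_apply_of_ne_of_ne hwv.symm hxv.symm]

variable [CommSemiring R] [LinearOrder R] [IsStrictOrderedRing R] [ExistsAddOfLE R]

lemma sum_perm_mul_apply_le_sum_perm_mul_self (f : ι → R) (v w : ι) :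
    ∑ σ : Perm ι, f (σ v) * f (σ w) ≤ ∑ σ : Perm ι, f (σ v) * f (σ v) := by
  have h2 : 2 * ∑ σ : Perm ι, f (σ v) * f (σ w) ≤ 2 * ∑ σ : Perm ι, f (σ v) * f (σ v) :=
    calc 2 * ∑ σ : Perm ι, f (σ v) * f (σ w)
        ≤ ∑ σ : Perm ι, (f (σ v) * f (σ v) + f (σ w) * f (σ w)) := by
          rw [Finset.mul_sum]
          gcongr with σ
          simpa [sq, mul_assoc] using two_mul_le_add_sq (f (σ v)) (f (σ w))
      _ = 2 * ∑ σ : Perm ι, f (σ v) * f (σ v) := by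
          rw [Finset.sum_add_distrib, sum_perm_apply_eq (fun i => f i * f i) w v, two_mul]
  exact le_of_mul_le_mul_left h2 two_pos

theorem card_mul_sum_perm_mul_apply_le {f : ι → R} {v w : ι} (hvw : v ≠ w) :
    Fintype.card (Perm ι) * ∑ σ : Perm ι, f (σ v) * f (σ w) ≤
      (∑ σ : Perm ι, f (σ v)) * ∑ σ : Perm ι, f (σ w) := by
  have hle : ∀ π : Perm ι,
      ∑ σ : Perm ι, f (σ v) * f (σ w) ≤ ∑ σ : Perm ι, f (σ v) * f (σ (π w)) := by
    intro π
    by_cases hv : π w = v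
    · rw [hv]; exact sum_perm_mul_apply_le_sum_perm_mul_self f v w
    by_cases hw : π w = w
    · rw [hw]
    · exact (sum_perm_apply_apply_eq_of_ne (fun i j => f i * f j) hvw.symm hv).ge
  calc Fintype.card (Perm ι) * ∑ σ : Perm ι, f (σ v) * f (σ w)
      = ∑ _π : Perm ι, ∑ σ : Perm ι, f (σ v) * f (σ w) := by
        rw [Finset.sum_const, Finset.card_univ, nsmul_eq_mul]
    _ ≤ ∑ π : Perm ι, ∑ σ : Perm ι, f (σ v) * f (σ (π w)) := Finset.sum_le_sum fun π _ => hle π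
    _ = ∑ σ : Perm ι, f (σ v) * ∑ π : Perm ι, f ((σ * π) w) := by
        rw [Finset.sum_comm]
        simp only [Finset.mul_sum, Perm.mul_apply]
    _ = (∑ σ : Perm ι, f (σ v)) * ∑ σ : Perm ι, f (σ w) := by
        rw [Finset.sum_mul]
        exact Finset.sum_congr rfl fun σ _ => by
          rw [← Equiv.sum_comp (Equiv.mulLeft σ) (fun τ : Perm ι => f (τ w))]; rfl

end Perm

theorem card_le_relDeg_and_le_relDeg_mul_card_le {n : ℕ} (m : ℕ) {v w : Fin n} (hvw : v ≠ w) :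
    Nat.card {p : DecSpace n | m ≤ relDeg p v ∧ m ≤ relDeg p w} * Nat.card (DecSpace n) ≤
      Nat.card {p : DecSpace n | m ≤ relDeg p v} * Nat.card {p : DecSpace n | m ≤ relDeg p w} := by
  set f : Fin n → ℕ := fun i => Nat.card {t : RecTree n | m ≤ rDeg t i}
  set P := Fintype.card (Equiv.Perm (Fin n))
  have hf : ∀ v : Fin n,
      Nat.card {p : DecSpace n | m ≤ relDeg p v} = ∑ σ : Equiv.Perm (Fin n), f (σ v) :=
    fun v => Nat.card_prod_eq_sum_card_preimage_mk_right _
  have hboth : Nat.card {p : DecSpace n | m ≤ relDeg p v ∧ m ≤ relDeg p w} =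
      ∑ σ : Equiv.Perm (Fin n), Nat.card {t : RecTree n | m ≤ rDeg t (σ v) ∧ m ≤ rDeg t (σ w)} :=
    Nat.card_prod_eq_sum_card_preimage_mk_right _
  have hcard : Nat.card (DecSpace n) = Nat.card (RecTree n) * P := by
    rw [Nat.card_prod, Nat.card_eq_fintype_card (α := Equiv.Perm (Fin n))]
  rw [hboth, hf, hf, hcard]
  calc (∑ σ : Equiv.Perm (Fin n),
        Nat.card {t : RecTree n | m ≤ rDeg t (σ v) ∧ m ≤ rDeg t (σ w)}) *
        (Nat.card (RecTree n) * P)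
      = P * ∑ σ : Equiv.Perm (Fin n),
          Nat.card {t : RecTree n | m ≤ rDeg t (σ v) ∧ m ≤ rDeg t (σ w)} *
            Nat.card (RecTree n) := by
        rw [Finset.sum_mul, Finset.mul_sum]
        exact Finset.sum_congr rfl fun σ _ => by ring
    _ ≤ P * ∑ σ : Equiv.Perm (Fin n), f (σ v) * f (σ w) :=
        Nat.mul_le_mul_left _ <| Finset.sum_le_sum fun σ _ =>
          card_le_rDeg_and_le_rDeg_mul_card_le m (σ.injective.ne hvw)
    _ ≤ (∑ σ : Equiv.Perm (Fin n), f (σ v)) * ∑ σ : Equiv.Perm (Fin n), f (σ w) :=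
        card_mul_sum_perm_mul_apply_le (R := ℕ) hvw

theorem dProb_le_relDeg_and_le_relDeg_le_mul {n : ℕ} (m : ℕ) {v w : Fin n} (hvw : v ≠ w) :
    dProb n {p | m ≤ relDeg p v ∧ m ≤ relDeg p w} ≤
      dProb n {p | m ≤ relDeg p v} * dProb n {p | m ≤ relDeg p w} := by
  have hN : (0 : ℝ) < Nat.card (DecSpace n) := by exact_mod_cast Nat.card_pos
  rw [dProb, dProb, dProb, div_mul_div_comm, div_le_div_iff₀ hN (by positivity), ← mul_assoc]
  refine mul_le_mul_of_nonneg_right ?_ hN.le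
  exact_mod_cast card_le_relDeg_and_le_relDeg_mul_card_le m hvw

lemma sub_one_lt_sqrt_one_add_two_mul_sub_sq {c : ℝ} (hc2 : c < 2) :
    c - 1 < Real.sqrt (1 + 2 * c - c ^ 2) := by
  rcases lt_or_ge c 1 with hc1 | hc1
  · exact (sub_neg.2 hc1).trans_le (Real.sqrt_nonneg _)
  · exact (Real.lt_sqrt (sub_nonneg.2 hc1)).2 (by nlinarith)

lemma sqrt_one_add_two_mul_sub_sq_le_two (c : ℝ) : Real.sqrt (1 + 2 * c - c ^ 2) ≤ 2 :=
  Real.sqrt_le_iff.2 ⟨zero_le_two, by nlinarith [sq_nonneg (c - 1)]⟩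

/-- Proposition 4.1: almost negative correlation of high degrees.
For every `c ∈ (0,2)` the quantity `(1 - c + √(1 + 2c - c²))/4` is `< 1`, and there are
`α > 0` below this quantity and a constant `C > 0` such that for all `n`, all `m` with
`0 < m < c ln n` and all distinct vertices `v, w`,
`P(D(v) ≥ m, D(w) ≥ m) ≤ P(D(v) ≥ m) P(D(w) ≥ m) + C ⬝ 2^{-2m} n^{-α}`. -/
theorem almost_negative_correlation (c : ℝ) (hc0 : 0 < c) (hc2 : c < 2) :
    (1 - c + Real.sqrt (1 + 2 * c - c ^ 2)) / 4 < 1 ∧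
    ∃ α : ℝ, 0 < α ∧ α < (1 - c + Real.sqrt (1 + 2 * c - c ^ 2)) / 4 ∧
      ∃ C > 0, ∀ n : ℕ, ∀ m : ℕ, 0 < m → (m : ℝ) < c * Real.log n →
        ∀ v w : Fin n, v ≠ w →
          dProb n {p | m ≤ relDeg p v ∧ m ≤ relDeg p w} ≤
            dProb n {p | m ≤ relDeg p v} * dProb n {p | m ≤ relDeg p w} +
              C * (2 : ℝ) ^ (-(2 * (m : ℝ))) * (n : ℝ) ^ (-α) := by
  have hpos := sub_one_lt_sqrt_one_add_two_mul_sub_sq hc2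
  have hle := sqrt_one_add_two_mul_sub_sq_le_two c
  -- Degrees of distinct vertices are exactly negatively correlated, so any `α` and `C` work.
  refine ⟨by linarith, (1 - c + Real.sqrt (1 + 2 * c - c ^ 2)) / 8, by linarith, by linarith,
    1, one_pos, fun n m _ _ v w hvw => ?_⟩
  have hcorr := dProb_le_relDeg_and_le_relDeg_le_mul m hvw
  have herr : 0 ≤ 1 * (2 : ℝ) ^ (-(2 * (m : ℝ))) *
      (n : ℝ) ^ (-((1 - c + Real.sqrt (1 + 2 * c - c ^ 2)) / 8)) := by positivity
  linarith
end

section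
/- For every c ∈ (0,2), setting ε = (2−c)²/4, the following holds: there exists a sequence δ_n ≥ 0 with δ_n = o(n^{−ε}) as n → ∞ such that for all n and all integers m with 0 < m < c·ln n, 2^{−m}·(1 − δ_n) ≤ P(D(1) ≥ m) ≤ 2^{−m}. Equivalently, 2^{−m}·n·(1 − δ_n) ≤ λ_{n,m} ≤ 2^{−m}·n, where λ_{n,m} = E[#{v ∈ [n] : D(v) ≥ m}]. -/
/-!
Let `S(n, m)` count the pairs (tree on `n + 1` vertices, vertex of degree `≥ m`). Relabeling by a
uniform permutation makes every vertex look alike, so `P(D(1) ≥ m) = S(n, m) / (n + 1)!` and the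
expected number of such vertices is `n + 1` times that. Attaching the newest vertex either to a
given vertex (one choice) or elsewhere (`n` choices) shows that `q(n, m) = 2 ^ m P(D(1) ≥ m)`
satisfies `q(n + 1, m + 1) = (2 q(n, m) + n q(n, m + 1)) / (n + 2)`. Hence `q ≤ 1`, and for
every `a ≥ 1`, with `b = 2 - 2 / a`, the deficit `1 - q(n, m)` is at most
`a ^ m ∏_{k < n} (1 - b / (k + 2)) ≤ a ^ m e ^ b (n + 1) ^ (-b)`. For `a = e ^ x`,
`x = (2 - c) / 2` and `m < c log n` this is `e ^ b n ^ (-(b - c x))`, and `b - c x > x ^ 2 = ε`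
because `e ^ (-x) < 1 - x + x ^ 2 / 2`.
-/

open Finset Real Filter Asymptotics Topology
open scoped Nat

lemma exp_neg_lt_one_sub_add_sq_div_two {x : ℝ} (hx : 0 < x) : exp (-x) < 1 - x + x ^ 2 / 2 := by
  have hpos : 0 < 1 - x + x ^ 2 / 2 := by nlinarith [sq_nonneg (x - 1)]
  rw [exp_neg, inv_lt_iff_one_lt_mul₀ (exp_pos x)]
  calc (1 : ℝ) < (1 - x + x ^ 2 / 2) * (1 + x + x ^ 2 / 2) := by nlinarith [pow_pos hx 4]
    _ ≤ (1 - x + x ^ 2 / 2) * exp x := by gcongr; exact quadratic_le_exp_of_nonneg hx.le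

lemma sq_div_four_lt_two_sub_two_mul_exp_neg_sub {c : ℝ} (hc : c < 2) :
    (2 - c) ^ 2 / 4 < 2 - 2 * exp (-((2 - c) / 2)) - c * ((2 - c) / 2) := by
  nlinarith [exp_neg_lt_one_sub_add_sq_div_two (show 0 < (2 - c) / 2 by linarith)]

lemma two_rpow_neg_mul_one_sub_le_and_le {p δ : ℝ} (m : ℕ) (hup : 2 ^ m * p ≤ 1)
    (hlow : 1 - 2 ^ m * p ≤ δ) :
    (2 : ℝ) ^ (-(m : ℝ)) * (1 - δ) ≤ p ∧ p ≤ (2 : ℝ) ^ (-(m : ℝ)) := by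
  have h2 : (0 : ℝ) < 2 ^ m := by positivity
  rw [rpow_neg two_pos.le, rpow_natCast]
  refine ⟨(inv_mul_le_iff₀ h2).2 (by linarith), ?_⟩
  rwa [← one_div, le_div_iff₀ h2, mul_comm]

lemma one_sub_div_add_two_nonneg {b : ℝ} (hb : b ≤ 2) (k : ℕ) :
    0 ≤ 1 - b / ((k : ℝ) + 2) := by
  rw [sub_nonneg, div_le_one (by positivity)]
  linarith [(k.cast_nonneg : (0 : ℝ) ≤ k)]

lemma log_add_two_le_one_add_sum_inv (n : ℕ) :
    log (n + 2) ≤ 1 + ∑ k ∈ range n, 1 / ((k : ℝ) + 2) := by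
  have h := log_add_one_le_harmonic (n + 1)
  simp only [harmonic, sum_range_succ'] at h
  push_cast at h
  have hsum :
      ∑ k ∈ range n, ((k : ℝ) + 1 + 1)⁻¹ = ∑ k ∈ range n, 1 / ((k : ℝ) + 2) :=
    sum_congr rfl fun k _ => by ring
  rw [show (n : ℝ) + 2 = n + 1 + 1 by ring]
  linarith

lemma prod_one_sub_div_add_two_le {b : ℝ} (hb0 : 0 ≤ b) (hb2 : b ≤ 2) (n : ℕ) :
    ∏ k ∈ range n, (1 - b / ((k : ℝ) + 2)) ≤ exp b * ((n : ℝ) + 1) ^ (-b) := by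
  calc ∏ k ∈ range n, (1 - b / ((k : ℝ) + 2))
      ≤ ∏ k ∈ range n, exp (-(b / ((k : ℝ) + 2))) := by
        exact prod_le_prod (fun k _ => one_sub_div_add_two_nonneg hb2 k)
          (fun k _ => one_sub_le_exp_neg _)
    _ = exp (b - b * (1 + ∑ k ∈ range n, 1 / ((k : ℝ) + 2))) := by
        rw [← exp_sum, mul_add, mul_sum]
        congr 1
        simp only [sum_neg_distrib, mul_one_div]
        ring
    _ ≤ exp (b - b * log ((n : ℝ) + 1)) := by
        gcongr
        calc log ((n : ℝ) + 1) ≤ log (n + 2) := log_le_log (by positivity) (by linarith)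
          _ ≤ _ := log_add_two_le_one_add_sum_inv n
    _ = exp b * ((n : ℝ) + 1) ^ (-b) := by
        rw [rpow_def_of_pos (by positivity), ← exp_add]
        ring_nf

lemma natCast_rpow_neg_isLittleO {s t : ℝ} (hst : s < t) :
    (fun n : ℕ => (n : ℝ) ^ (-t)) =o[atTop] fun n => (n : ℝ) ^ (-s) := by
  have hlim : Tendsto (fun n : ℕ => (n : ℝ) ^ (-(t - s))) atTop (𝓝 0) :=
    (tendsto_rpow_neg_atTop (sub_pos.2 hst)).comp tendsto_natCast_atTop_atTop
  refine (((isLittleO_one_iff ℝ).2 hlim).mul_isBigO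
    (isBigO_refl (fun n : ℕ => (n : ℝ) ^ (-s)) atTop)).congr' ?_ (by simp)
  filter_upwards [eventually_gt_atTop 0] with n hn
  rw [← rpow_add (by positivity)]
  ring_nf

lemma Equiv.Perm.card_smul_sum_apply {α M : Type*} [Fintype α] [DecidableEq α]
    [AddCommMonoid M] (f : α → M) (v : α) :
    Fintype.card α • ∑ σ : Equiv.Perm α, f (σ v) = (Fintype.card α)! • ∑ i, f i := by
  have hv (w : α) : ∑ σ : Equiv.Perm α, f (σ v) = ∑ σ : Equiv.Perm α, f (σ w) := by
    rw [← Equiv.sum_comp (Equiv.mulRight (Equiv.swap v w)) (fun σ : Equiv.Perm α => f (σ w))]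
    simp
  calc Fintype.card α • ∑ σ : Equiv.Perm α, f (σ v)
      = ∑ w, ∑ σ : Equiv.Perm α, f (σ w) := by rw [← sum_congr rfl fun w _ => hv w]; simp
    _ = ∑ σ : Equiv.Perm α, ∑ i, f i := by
        rw [sum_comm]; exact sum_congr rfl fun σ _ => Equiv.sum_comp σ f
    _ = (Fintype.card α)! • ∑ i, f i := by rw [sum_const, Finset.card_univ, Fintype.card_perm]

namespace RecTree

-- `RecTree (n + 1)` unfolds to `ParentSeq n`. Degrees take a vertex in `ℕ`, so that they make
-- sense in every `ParentSeq n` as the tree grows by `Fin.snoc`.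
abbrev ParentSeq (n : ℕ) := ∀ j : Fin n, Fin ((j : ℕ) + 1)

def degree {n : ℕ} (t : ParentSeq n) (i : ℕ) : ℕ := #{j | (t j : ℕ) = i}

def tailCount (n m i : ℕ) : ℕ := #{t : ParentSeq n | m ≤ degree t i}

def totalTailCount (n m : ℕ) : ℕ := ∑ i : Fin (n + 1), tailCount n m i

lemma card_parentSeq (n : ℕ) : Fintype.card (ParentSeq n) = n ! := by
  rw [Fintype.card_pi]
  simp only [Fintype.card_fin]
  rw [Fin.prod_univ_eq_prod_range (· + 1), prod_range_add_one_eq_factorial]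

lemma degree_eq_zero_of_le {n i : ℕ} (t : ParentSeq n) (h : n ≤ i) : degree t i = 0 := by
  refine Finset.card_eq_zero.2 (filter_eq_empty_iff.2 fun j _ => ?_)
  have := (t j).isLt
  omega

lemma degree_snoc {n : ℕ} (k : Fin (n + 1)) (t : ParentSeq n) (i : ℕ) :
    degree (Fin.snocEquiv (fun j : Fin (n + 1) => Fin ((j : ℕ) + 1)) (k, t)) i
      = degree t i + if (k : ℕ) = i then 1 else 0 := by
  rw [degree, degree, card_filter, card_filter, Fin.sum_univ_castSucc]
  simp [Fin.snocEquiv]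

lemma tailCount_zero_right (n i : ℕ) : tailCount n 0 i = n ! := by
  simp only [tailCount, zero_le, filter_true, Finset.card_univ, card_parentSeq]

lemma tailCount_succ_of_le {n i : ℕ} (m : ℕ) (h : n ≤ i) : tailCount n (m + 1) i = 0 := by
  simp [tailCount, degree_eq_zero_of_le _ h]

lemma tailCount_succ_succ {n i : ℕ} (m : ℕ) (hi : i ≤ n) :
    tailCount (n + 1) (m + 1) i = tailCount n m i + n * tailCount n (m + 1) i := by
  have hfiber (k : Fin (n + 1)) :
      #{t : ParentSeq n | m + 1 ≤ degree t i + if (k : ℕ) = i then 1 else 0}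
        = if (k : ℕ) = i then tailCount n m i else tailCount n (m + 1) i := by
    split_ifs <;> simp [tailCount]
  calc tailCount (n + 1) (m + 1) i
      = ∑ k : Fin (n + 1),
          #{t : ParentSeq n | m + 1 ≤ degree t i + if (k : ℕ) = i then 1 else 0} := by
        rw [tailCount, card_filter, ← Equiv.sum_comp (Fin.snocEquiv _), Fintype.sum_prod_type]
        simp only [degree_snoc, card_filter]
        rfl
    _ = tailCount n m i + n * tailCount n (m + 1) i := by
        rw [Fin.sum_univ_succAbove _ ⟨i, by omega⟩]
        simp only [hfiber]
        simp [Fin.val_ne_iff.2 (Fin.succAbove_ne _ _), tailCount]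

lemma totalTailCount_zero_right (n : ℕ) : totalTailCount n 0 = (n + 1) * n ! := by
  simp [totalTailCount, tailCount_zero_right]

lemma totalTailCount_zero_succ (m : ℕ) : totalTailCount 0 (m + 1) = 0 := by
  simp [totalTailCount, tailCount_succ_of_le]

lemma totalTailCount_succ_succ (n m : ℕ) :
    totalTailCount (n + 1) (m + 1) = totalTailCount n m + n * totalTailCount n (m + 1) := by
  rw [totalTailCount, Fin.sum_univ_castSucc, Fin.val_last, tailCount_succ_of_le _ le_rfl,
    add_zero, totalTailCount, totalTailCount, mul_sum, ← sum_add_distrib]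
  exact sum_congr rfl fun i _ => tailCount_succ_succ m (Nat.lt_succ_iff.1 i.isLt)

noncomputable def tailProb (n m : ℕ) : ℝ := totalTailCount n m / (n + 1)!

lemma tailProb_zero_right (n : ℕ) : tailProb n 0 = 1 := by
  rw [tailProb, totalTailCount_zero_right, Nat.factorial_succ]
  exact div_self (by positivity)

lemma tailProb_zero_succ (m : ℕ) : tailProb 0 (m + 1) = 0 := by
  simp [tailProb, totalTailCount_zero_succ]

lemma tailProb_succ_succ (n m : ℕ) :
    tailProb (n + 1) (m + 1) = (tailProb n m + n * tailProb n (m + 1)) / (n + 2) := by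
  simp only [tailProb, totalTailCount_succ_succ, Nat.factorial_succ (n + 1)]
  push_cast
  field_simp
  ring

lemma two_pow_mul_tailProb_le_one (n m : ℕ) : 2 ^ m * tailProb n m ≤ 1 := by
  induction n generalizing m with
  | zero => cases m <;> simp [tailProb_zero_right, tailProb_zero_succ]
  | succ n ih =>
    cases m with
    | zero => simp [tailProb_zero_right]
    | succ m =>
      rw [tailProb_succ_succ, mul_div_assoc', div_le_one (by positivity)]
      calc 2 ^ (m + 1) * (tailProb n m + n * tailProb n (m + 1))
          = 2 * (2 ^ m * tailProb n m) + n * (2 ^ (m + 1) * tailProb n (m + 1)) := by ring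
        _ ≤ 2 * 1 + n * 1 := by gcongr <;> apply ih
        _ = n + 2 := by ring

lemma one_sub_two_pow_mul_tailProb_le {a : ℝ} (ha : 1 ≤ a) (n m : ℕ) :
    1 - 2 ^ m * tailProb n m ≤ a ^ m * ∏ k ∈ range n, (1 - (2 - 2 / a) / (k + 2)) := by
  have hfactor (k : ℕ) : 1 - (2 - 2 / a) / (k + 2) = (k + 2 / a) / (k + 2) := by
    field_simp; ring
  simp only [hfactor]
  induction n generalizing m with
  | zero =>
    cases m with
    | zero => simp [tailProb_zero_right]
    | succ m => simpa [tailProb_zero_succ] using one_le_pow₀ ha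
  | succ n ih =>
    cases m with
    | zero =>
      simp only [tailProb_zero_right, pow_zero, one_mul, sub_self]
      positivity
    | succ m =>
      rw [tailProb_succ_succ, prod_range_succ]
      have h1 := ih m
      have h2 := ih (m + 1)
      set P := ∏ k ∈ range n, ((k : ℝ) + 2 / a) / (k + 2)
      have ha0 : a ≠ 0 := by positivity
      calc 1 - 2 ^ (m + 1) * ((tailProb n m + n * tailProb n (m + 1)) / (n + 2))
          = (2 * (1 - 2 ^ m * tailProb n m) + n * (1 - 2 ^ (m + 1) * tailProb n (m + 1)))
              / (n + 2) := by field_simp; ring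
        _ ≤ (2 * (a ^ m * P) + n * (a ^ (m + 1) * P)) / (n + 2) := by gcongr
        _ = a ^ (m + 1) * (P * ((n + 2 / a) / (n + 2))) := by field_simp; ring

lemma rDeg_eq_degree {N : ℕ} (t : RecTree (N + 1)) (i : Fin (N + 1)) :
    rDeg t i = degree (n := N) t i := by
  rw [rDeg, Nat.card_eq_fintype_card, Fintype.card_subtype]
  rfl

lemma card_decSpace (N : ℕ) : Nat.card (DecSpace (N + 1)) = N ! * (N + 1)! := by
  rw [Nat.card_eq_fintype_card, Fintype.card_prod, Fintype.card_perm, Fintype.card_fin]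
  exact congrArg (· * (N + 1)!) (card_parentSeq N)

lemma sum_card_degree_ge (N m : ℕ) :
    ∑ t : ParentSeq N, #{i : Fin (N + 1) | m ≤ degree t i} = totalTailCount N m := by
  simp only [totalTailCount, tailCount, card_filter]
  exact sum_comm

lemma card_relDeg_ge (N m : ℕ) (v : Fin (N + 1)) :
    Nat.card {p : DecSpace (N + 1) // m ≤ relDeg p v} = N ! * totalTailCount N m := by
  have hsum : Nat.card {p : DecSpace (N + 1) // m ≤ relDeg p v}
      = ∑ σ : Equiv.Perm (Fin (N + 1)), tailCount N m (σ v) := by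
    rw [Nat.card_eq_fintype_card, Fintype.card_subtype, card_filter, Fintype.sum_prod_type_right]
    simp only [relDeg, rDeg_eq_degree, tailCount, card_filter]
    rfl
  have hsym := Equiv.Perm.card_smul_sum_apply (fun i : Fin (N + 1) => tailCount N m i) v
  rw [Fintype.card_fin, smul_eq_mul, smul_eq_mul, Nat.factorial_succ, mul_assoc] at hsym
  rw [hsum, totalTailCount]
  exact Nat.eq_of_mul_eq_mul_left N.succ_pos hsym

lemma sum_card_relDeg_ge (N m : ℕ) :
    ∑ p : DecSpace (N + 1), Nat.card {v : Fin (N + 1) // m ≤ relDeg p v}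
      = (N + 1)! * totalTailCount N m := by
  have hrelabel (p : DecSpace (N + 1)) : Nat.card {v : Fin (N + 1) // m ≤ relDeg p v}
      = #{i : Fin (N + 1) | m ≤ degree (n := N) p.1 i} := by
    refine (Nat.card_congr (Equiv.subtypeEquiv (q := fun i => m ≤ rDeg p.1 i) p.2
      fun v => Iff.rfl)).trans ?_
    rw [Nat.card_eq_fintype_card, Fintype.card_subtype]
    simp only [rDeg_eq_degree]
  simp only [hrelabel, Fintype.sum_prod_type, sum_const, Finset.card_univ, Fintype.card_perm,
    Fintype.card_fin, smul_eq_mul, ← mul_sum]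
  exact congrArg _ (sum_card_degree_ge N m)

lemma dProb_relDeg_ge (N m : ℕ) (v : Fin (N + 1)) :
    dProb (N + 1) {p | m ≤ relDeg p v} = tailProb N m := by
  simp only [dProb, Set.mem_ofPred_eq]
  rw [card_decSpace, card_relDeg_ge, tailProb]
  push_cast
  rw [mul_div_mul_left _ _ (by positivity)]

lemma expected_card_relDeg_ge (N m : ℕ) :
    (∑ p : DecSpace (N + 1), (Nat.card {v : Fin (N + 1) // m ≤ relDeg p v} : ℝ))
      / Nat.card (DecSpace (N + 1)) = (N + 1) * tailProb N m := by
  rw [← Nat.cast_sum, sum_card_relDeg_ge, card_decSpace, tailProb, Nat.factorial_succ]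
  push_cast
  field_simp

lemma one_sub_two_pow_mul_tailProb_le_rpow {c x : ℝ} (hx : 0 ≤ x) {N m : ℕ}
    (hm : (m : ℝ) ≤ c * log (N + 1)) :
    1 - 2 ^ m * tailProb N m
      ≤ exp (2 - 2 * exp (-x)) * ((N : ℝ) + 1) ^ (-(2 - 2 * exp (-x) - c * x)) := by
  set b := 2 - 2 * exp (-x)
  have hb : 2 - 2 / exp x = b := by rw [div_eq_mul_inv, ← exp_neg]
  have hb0 : 0 ≤ b := by linarith [exp_le_one_iff.2 (neg_nonpos.2 hx)]
  have hb2 : b ≤ 2 := by linarith [exp_pos (-x)]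
  have hpow : exp x ^ m ≤ ((N : ℝ) + 1) ^ (c * x) := by
    rw [← exp_nat_mul, rpow_def_of_pos (by positivity)]
    exact exp_le_exp.2 (by nlinarith)
  calc 1 - 2 ^ m * tailProb N m ≤ exp x ^ m * ∏ k ∈ range N, (1 - b / ((k : ℝ) + 2)) :=
        hb ▸ one_sub_two_pow_mul_tailProb_le (one_le_exp hx) N m
    _ ≤ ((N : ℝ) + 1) ^ (c * x) * (exp b * ((N : ℝ) + 1) ^ (-b)) := by
        gcongr
        · exact prod_nonneg fun k _ => one_sub_div_add_two_nonneg hb2 k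
        · exact prod_one_sub_div_add_two_le hb0 hb2 N
    _ = exp b * ((N : ℝ) + 1) ^ (-(b - c * x)) := by
        rw [mul_left_comm, ← rpow_add (by positivity)]
        ring_nf

end RecTree

open RecTree

open Filter in
theorem degree_tail_estimates_general (c : ℝ) (hc2 : c < 2) :
    ∃ δ : ℕ → ℝ, (∀ n, 0 ≤ δ n) ∧
      (δ =o[atTop] fun n : ℕ => (n : ℝ) ^ (-((2 - c) ^ 2 / 4))) ∧
      ∀ n : ℕ, ∀ hn : 1 ≤ n, ∀ m : ℕ, 0 < m → (m : ℝ) < c * Real.log n →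
        ((2 : ℝ) ^ (-(m : ℝ)) * (1 - δ n) ≤ dProb n {p | m ≤ relDeg p ⟨0, hn⟩} ∧
          dProb n {p | m ≤ relDeg p ⟨0, hn⟩} ≤ (2 : ℝ) ^ (-(m : ℝ))) ∧
        ((2 : ℝ) ^ (-(m : ℝ)) * (n : ℝ) * (1 - δ n) ≤
            (∑ p : DecSpace n, (Nat.card {v : Fin n // m ≤ relDeg p v} : ℝ)) /
              (Nat.card (DecSpace n) : ℝ) ∧
          (∑ p : DecSpace n, (Nat.card {v : Fin n // m ≤ relDeg p v} : ℝ)) /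
              (Nat.card (DecSpace n) : ℝ) ≤ (2 : ℝ) ^ (-(m : ℝ)) * (n : ℝ)) := by
  set x := (2 - c) / 2 with hx_def
  set b := 2 - 2 * exp (-x)
  have hx : 0 ≤ x := by rw [hx_def]; linarith
  refine ⟨fun n => exp b * (n : ℝ) ^ (-(b - c * x)), fun n => by positivity,
    (natCast_rpow_neg_isLittleO (sq_div_four_lt_two_sub_two_mul_exp_neg_sub hc2)).const_mul_left _,
    ?_⟩
  intro n hn m _ hm
  obtain ⟨N, rfl⟩ := Nat.exists_eq_add_of_le' hn
  have hdeficit := one_sub_two_pow_mul_tailProb_le_rpow (c := c) hx (N := N) (m := m)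
    (by push_cast at hm; linarith)
  have hprob := two_rpow_neg_mul_one_sub_le_and_le m (two_pow_mul_tailProb_le_one N m) hdeficit
  have hN : (0 : ℝ) ≤ N + 1 := by positivity
  rw [dProb_relDeg_ge, expected_card_relDeg_ge]
  push_cast
  exact ⟨hprob, by linarith [mul_le_mul_of_nonneg_left hprob.1 hN],
    by linarith [mul_le_mul_of_nonneg_left hprob.2 hN]⟩

open Filter in
/-- Proposition: bounds on `P(D(1) ≥ m)`, Appendix A, Prop. `upper m`.
For every `c ∈ (0,2)`, with `ε = (2-c)²/4`, there is a nonnegative sequence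
`δ_n = o(n^{-ε})` such that for all `n ≥ 1` and all `0 < m < c ln n`,
`2^{-m}(1 - δ_n) ≤ P(D(1) ≥ m) ≤ 2^{-m}`; equivalently,
`2^{-m} n (1 - δ_n) ≤ λ_{n,m} ≤ 2^{-m} n` where `λ_{n,m} = E[#{v : D(v) ≥ m}]`. -/
theorem degree_tail_estimates (c : ℝ) (hc0 : 0 < c) (hc2 : c < 2) :
    ∃ δ : ℕ → ℝ, (∀ n, 0 ≤ δ n) ∧
      (δ =o[atTop] fun n : ℕ => (n : ℝ) ^ (-((2 - c) ^ 2 / 4))) ∧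
      ∀ n : ℕ, ∀ hn : 1 ≤ n, ∀ m : ℕ, 0 < m → (m : ℝ) < c * Real.log n →
        ((2 : ℝ) ^ (-(m : ℝ)) * (1 - δ n) ≤ dProb n {p | m ≤ relDeg p ⟨0, hn⟩} ∧
          dProb n {p | m ≤ relDeg p ⟨0, hn⟩} ≤ (2 : ℝ) ^ (-(m : ℝ))) ∧
        ((2 : ℝ) ^ (-(m : ℝ)) * (n : ℝ) * (1 - δ n) ≤
            (∑ p : DecSpace n, (Nat.card {v : Fin n // m ≤ relDeg p v} : ℝ)) /
              (Nat.card (DecSpace n) : ℝ) ∧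
          (∑ p : DecSpace n, (Nat.card {v : Fin n // m ≤ relDeg p v} : ℝ)) /
              (Nat.card (DecSpace n) : ℝ) ≤ (2 : ℝ) ^ (-(m : ℝ)) * (n : ℝ)) :=
  degree_tail_estimates_general c hc2
end

section
/- Let A be a finite set and (I_a)_{a∈A} an exchangeable collection of {0,1}-valued random variables with P(I_a = 1) > 0, W = Σ_{a∈A} I_a and λ = E[W]. Fix a ∈ A and suppose there is a vector-level coupling: random vectors (I_b)_{b∈A} and (J_{ab})_{b∈A} on a common probability space, where (I_b)_{b∈A} has the law of the original collection and (J_{ab})_{b∈A} has its conditional law given I_a = 1, such that J_{ab} ≤ I_b almost surely for every b ∈ A with b ≠ a. Then d_TV(W, Poisson(λ)) ≤ E[I_a] + Σ_{b ∈ A, b ≠ a} E[I_b − J_{ab}]. -/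
/-!
Stein's method. For `t ⊆ ℕ` and `r > 0` the Poisson Stein equation
`r f (k + 1) - k f k = 1_t k - Po(r)(t)`, `f 0 = 0`, has a solution whose increments are at most
`1 / r` in absolute value: it is the sum over `j ∈ t` of the solutions for the singletons `{j}`,
whose increments are nonpositive except at `k = j`, where they are at most `1 / r`; the bound from
below follows by passing to the complement of `t`. Evaluating the equation at `W` gives
`P(W ∈ t) - Po(λ)(t) = E[λ f (W + 1) - W f W]`. Exchangeability gives the size-bias identity
`E[W g(W)] = λ E[g(V)]` for `V = ∑ J_b`, so the difference is `λ E[f (W' + 1) - f V]` with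
`W' = ∑ I'_b`. As `J_a = 1` almost surely, the coupling forces `V ≤ W' + 1`, so
`|f (W' + 1) - f V| ≤ (W' + 1 - V) / λ`, and `E[W' + 1 - V] = E[I_a] + ∑_{b ≠ a} E[I'_b - J_b]`.
-/

open MeasureTheory ProbabilityTheory

/-- Total variation distance between two (probability) measures on `ℕ`. -/
noncomputable def tvDistM (μ ν : Measure ℕ) : ℝ :=
  ⨆ s : Set ℕ, |(μ s).toReal - (ν s).toReal|

open Finset
open scoped NNReal Nat

section Discrete

variable {Ω Ω' : Type*} [MeasurableSpace Ω] [MeasurableSpace Ω'] {μ : Measure Ω}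

lemma integrable_comp_of_ae_mem_finite [IsFiniteMeasure μ] {α : Type*}
    [MeasurableSpace α] [DiscreteMeasurableSpace α] {X : Ω → α} (hX : AEMeasurable X μ)
    {S : Set α} (hS : S.Finite) (hXS : ∀ᵐ ω ∂μ, X ω ∈ S) (g : α → ℝ) :
    Integrable (fun ω => g (X ω)) μ := by
  obtain ⟨C, hC⟩ := (hS.image fun x => ‖g x‖).bddAbove
  refine (integrable_const C).mono'
    (Measurable.of_discrete.comp_aemeasurable hX).aestronglyMeasurable ?_
  filter_upwards [hXS] with ω hω
  exact hC (Set.mem_image_of_mem _ hω)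

lemma integrable_comp_of_ae_le [IsFiniteMeasure μ] {X : Ω → ℕ}
    (hX : AEMeasurable X μ) {N : ℕ} (hXN : ∀ᵐ ω ∂μ, X ω ≤ N) (g : ℕ → ℝ) :
    Integrable (fun ω => g (X ω)) μ :=
  integrable_comp_of_ae_mem_finite hX (Set.finite_Iic N) hXN g

lemma ProbabilityTheory.IdentDistrib.integrable_comp_of_ae_mem_finite {ν : Measure Ω'}
    [IsFiniteMeasure ν] {α : Type*} [MeasurableSpace α] [DiscreteMeasurableSpace α]
    {X : Ω' → α} {Y : Ω → α}
    (h : IdentDistrib X Y ν μ) {S : Set α} (hS : S.Finite) (hYS : ∀ᵐ ω ∂μ, Y ω ∈ S)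
    (g : α → ℝ) : Integrable (fun ω => g (X ω)) ν :=
  _root_.integrable_comp_of_ae_mem_finite h.aemeasurable_fst hS
    (h.symm.ae_mem_snd .of_discrete hYS) g

lemma setIntegral_eq_measureReal_mul_integral_cond [IsFiniteMeasure μ] (s : Set Ω) (h : Ω → ℝ) :
    ∫ ω in s, h ω ∂μ = μ.real s * ∫ ω, h ω ∂μ[|s] := by
  by_cases hμs : μ s = 0
  · rw [Measure.restrict_eq_zero.2 hμs, integral_zero_measure, measureReal_def, hμs,
      ENNReal.toReal_zero, zero_mul]
  · rw [ProbabilityTheory.cond, integral_smul_measure, smul_eq_mul, ← mul_assoc, measureReal_def,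
      ENNReal.toReal_inv, mul_inv_cancel₀ (ENNReal.toReal_ne_zero.2 ⟨hμs, measure_ne_top μ s⟩),
      one_mul]

lemma integral_mul_eq_setIntegral {X : Ω → ℕ} (hX : Measurable X) (hX1 : ∀ ω, X ω ≤ 1)
    (h : Ω → ℝ) : ∫ ω, X ω * h ω ∂μ = ∫ ω in {ω | X ω = 1}, h ω ∂μ := by
  rw [← integral_indicator
    (show MeasurableSet {ω | X ω = 1} from hX (measurableSet_singleton 1))]
  congr 1 with ω
  rcases Nat.le_one_iff_eq_zero_or_eq_one.1 (hX1 ω) with h0 | h1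
  · simp [h0]
  · simp [h1]

end Discrete

section Countable

variable {α : Type*} [MeasurableSpace α] [Countable α] [MeasurableSingletonClass α]
  (μ : Measure α) [IsFiniteMeasure μ]

lemma summable_measureReal_singleton : Summable fun x => μ.real {x} := by
  refine ENNReal.summable_toReal ?_
  rw [← Set.indicator_univ (fun x => μ {x}), Measure.tsum_indicator_apply_singleton μ _ .univ]
  exact measure_ne_top μ _

lemma measureReal_eq_tsum_indicator (s : Set α) :
    μ.real s = ∑' x, s.indicator (fun x => μ.real {x}) x := by
  rw [measureReal_def, ← Measure.tsum_indicator_apply_singleton μ s (.of_discrete),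
    ENNReal.tsum_toReal_eq fun x => ((Set.indicator_le_self s (fun x => μ {x}) x).trans_lt
      (measure_lt_top μ _)).ne]
  congr 1 with x
  by_cases hx : x ∈ s <;> simp [hx, measureReal_def]

end Countable

section PoissonStein

variable {r : ℝ≥0}

noncomputable def steinHead (r : ℝ≥0) (k : ℕ) : ℝ :=
  k ! / (r : ℝ) ^ (k + 1) * ∑ i ∈ range (k + 1), (r : ℝ) ^ i / i !

noncomputable def steinTail (r : ℝ≥0) (k : ℕ) : ℝ :=
  k ! / (r : ℝ) ^ (k + 1) * ∑' m, (r : ℝ) ^ (m + (k + 1)) / (m + (k + 1))!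

lemma steinHead_nonneg (r : ℝ≥0) (k : ℕ) : 0 ≤ steinHead r k := by
  unfold steinHead; positivity

lemma steinHead_add_steinTail (r : ℝ≥0) (k : ℕ) :
    steinHead r k + steinTail r k = k ! / (r : ℝ) ^ (k + 1) * Real.exp r := by
  rw [steinHead, steinTail, ← mul_add, Real.exp_eq_exp_ℝ,
    ← (NormedSpace.expSeries_div_hasSum_exp (r : ℝ)).tsum_eq,
    (Real.summable_pow_div_factorial r).sum_add_tsum_nat_add]

lemma poissonMeasure_real_singleton_mul_steinHead_add_steinTail (hr : 0 < r) (k : ℕ) :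
    Po(r).real {k} * (steinHead r k + steinTail r k) = 1 / r := by
  rw [steinHead_add_steinTail, poissonMeasure_real_singleton, Real.exp_neg]
  have : (r : ℝ) ≠ 0 := by positivity
  field_simp
  ring

lemma mul_steinHead_zero (hr : 0 < r) : r * steinHead r 0 = 1 := by
  have : (r : ℝ) ≠ 0 := by positivity
  simp [steinHead, this]

lemma mul_steinHead_succ (hr : 0 < r) (k : ℕ) :
    r * steinHead r (k + 1) = (k + 1) * steinHead r k + 1 := by
  have : (r : ℝ) ≠ 0 := by positivity
  rw [steinHead, steinHead, sum_range_succ _ (k + 1), Nat.factorial_succ]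
  push_cast
  field_simp
  ring

/-- The termwise comparison `r * r ^ i / i ! ≤ (k + 1) * r ^ (i + 1) / (i + 1)!` for `i ≤ k`. -/
lemma steinHead_le_succ (hr : 0 < r) (k : ℕ) : steinHead r k ≤ steinHead r (k + 1) := by
  have hsum : (r : ℝ) * ∑ i ∈ range (k + 1), (r : ℝ) ^ i / i !
      ≤ (k + 1) * ∑ i ∈ range (k + 2), (r : ℝ) ^ i / i ! := by
    rw [sum_range_succ' _ (k + 1), mul_sum, mul_add, mul_sum]
    refine le_add_of_le_of_nonneg (sum_le_sum fun i hi => ?_) (by positivity)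
    have hik : (i : ℝ) + 1 ≤ k + 1 := by
      exact_mod_cast Nat.succ_le_succ (mem_range_succ_iff.1 hi)
    rw [Nat.factorial_succ, pow_succ]
    push_cast
    rw [show (r : ℝ) * (r ^ i / i !) = ((i : ℝ) + 1) * (r ^ i * r / ((i + 1) * i !)) by
      field_simp]
    exact mul_le_mul_of_nonneg_right hik (by positivity)
  have hr0 : (r : ℝ) ≠ 0 := by positivity
  calc steinHead r k
      = k ! / (r : ℝ) ^ (k + 2) * (r * ∑ i ∈ range (k + 1), (r : ℝ) ^ i / i !) := by
        rw [steinHead]; field_simp; ring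
    _ ≤ k ! / (r : ℝ) ^ (k + 2) * ((k + 1) * ∑ i ∈ range (k + 2), (r : ℝ) ^ i / i !) := by
        gcongr
    _ = steinHead r (k + 1) := by
        rw [steinHead, Nat.factorial_succ]; push_cast; ring

/-- The termwise comparison `(k + 1) * r ^ (n + 1) / (n + 1)! ≤ r * r ^ n / n !` for `n > k`. -/
lemma steinTail_succ_le (hr : 0 < r) (k : ℕ) : steinTail r (k + 1) ≤ steinTail r k := by
  have hr0 : (r : ℝ) ≠ 0 := by positivity
  have hsummable (n : ℕ) : Summable fun m => (r : ℝ) ^ (m + n) / (m + n)! :=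
    (summable_nat_add_iff n).2 (Real.summable_pow_div_factorial r)
  have hsum : ((k : ℝ) + 1) * ∑' m, (r : ℝ) ^ (m + (k + 2)) / (m + (k + 2))!
      ≤ r * ∑' m, (r : ℝ) ^ (m + (k + 1)) / (m + (k + 1))! := by
    rw [← tsum_mul_left, ← tsum_mul_left]
    refine Summable.tsum_le_tsum (fun m => ?_) ((hsummable _).mul_left _)
      ((hsummable _).mul_left _)
    have hkm : (k : ℝ) + 1 ≤ (m + (k + 1) : ℕ) + 1 := by
      push_cast; linarith [m.cast_nonneg (α := ℝ)]
    rw [show m + (k + 2) = m + (k + 1) + 1 by ring, Nat.factorial_succ, pow_succ]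
    push_cast
    rw [show (r : ℝ) * (r ^ (m + (k + 1)) / (m + (k + 1))!) = ((m + (k + 1) : ℕ) + 1)
        * (r ^ (m + (k + 1)) * r / ((m + (k + 1) + 1) * (m + (k + 1))!)) by
      push_cast; field_simp]
    exact mul_le_mul_of_nonneg_right hkm (by positivity)
  calc steinTail r (k + 1) = k ! / (r : ℝ) ^ (k + 2)
        * (((k : ℝ) + 1) * ∑' m, (r : ℝ) ^ (m + (k + 2)) / (m + (k + 2))!) := by
        rw [steinTail, Nat.factorial_succ]; push_cast; ring
    _ ≤ k ! / (r : ℝ) ^ (k + 2) * (r * ∑' m, (r : ℝ) ^ (m + (k + 1)) / (m + (k + 1))!) := by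
        gcongr
    _ = steinTail r k := by rw [steinTail]; field_simp; ring

lemma mul_steinTail_succ (hr : 0 < r) (k : ℕ) :
    r * steinTail r (k + 1) = (k + 1) * steinTail r k - 1 := by
  have hr0 : (r : ℝ) ≠ 0 := by positivity
  have hsum := steinHead_add_steinTail r k
  have hsum' := steinHead_add_steinTail r (k + 1)
  have hexp : (r : ℝ) * ((k + 1)! / (r : ℝ) ^ (k + 1 + 1) * Real.exp r)
      = ((k : ℝ) + 1) * (k ! / (r : ℝ) ^ (k + 1) * Real.exp r) := by
    rw [Nat.factorial_succ]; push_cast; field_simp; ring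
  linear_combination r * hsum' + hexp - (k + 1) * hsum - mul_steinHead_succ hr k

/-- The classical solution
`f (k + 1) = k! / r ^ (k + 1) * (1{j ≤ k} r ^ j / j! - P(Po(r) = j) ∑_{i ≤ k} r ^ i / i!)`
of the Stein equation for `{j}`, rewritten with `steinHead` and `steinTail`. -/
noncomputable def steinSingleton (r : ℝ≥0) (j : ℕ) : ℕ → ℝ
  | 0 => 0
  | k + 1 => Po(r).real {j} * if j ≤ k then steinTail r k else -steinHead r k

lemma steinSingleton_stein_eq (hr : 0 < r) (j k : ℕ) :
    r * steinSingleton r j (k + 1) - k * steinSingleton r j k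
      = (if j = k then 1 else 0) - Po(r).real {j} := by
  have hdiag : (r : ℝ) * (Po(r).real {j} * (steinHead r j + steinTail r j)) = 1 := by
    rw [poissonMeasure_real_singleton_mul_steinHead_add_steinTail hr]
    field_simp
  rcases k with _ | m
  · simp only [steinSingleton]
    rcases j with _ | j
    · rw [if_pos le_rfl, if_pos rfl]
      linear_combination hdiag - Po(r).real {0} * mul_steinHead_zero hr
    · rw [if_neg (by omega), if_neg (by omega)]
      linear_combination -Po(r).real {j + 1} * mul_steinHead_zero hr
  · simp only [steinSingleton]
    push_cast
    rcases lt_trichotomy j (m + 1) with hj | rfl | hj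
    · rw [if_pos (show j ≤ m + 1 by omega), if_pos (show j ≤ m by omega), if_neg hj.ne]
      linear_combination Po(r).real {j} * mul_steinTail_succ hr m
    · rw [if_pos (show m + 1 ≤ m + 1 from le_rfl), if_neg (show ¬ m + 1 ≤ m by omega),
        if_pos rfl]
      linear_combination hdiag - Po(r).real {m + 1} * mul_steinHead_succ hr m
    · rw [if_neg (show ¬ j ≤ m + 1 by omega), if_neg (show ¬ j ≤ m by omega), if_neg hj.ne']
      linear_combination -Po(r).real {j} * mul_steinHead_succ hr m

lemma steinSingleton_succ_sub_le (hr : 0 < r) (j k : ℕ) :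
    steinSingleton r j (k + 1) - steinSingleton r j k ≤ if j = k then 1 / (r : ℝ) else 0 := by
  have hw : 0 ≤ Po(r).real {j} := measureReal_nonneg
  have hdiag := poissonMeasure_real_singleton_mul_steinHead_add_steinTail hr j
  rcases k with _ | m
  · simp only [steinSingleton]
    rcases j with _ | j
    · rw [if_pos le_rfl, if_pos rfl]
      linarith [mul_nonneg hw (steinHead_nonneg r 0)]
    · rw [if_neg (by omega), if_neg (by omega)]
      linarith [mul_nonneg hw (steinHead_nonneg r 0)]
  · simp only [steinSingleton]
    rcases lt_trichotomy j (m + 1) with hj | rfl | hj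
    · rw [if_pos (show j ≤ m + 1 by omega), if_pos (show j ≤ m by omega), if_neg hj.ne]
      linarith [mul_le_mul_of_nonneg_left (steinTail_succ_le hr m) hw]
    · rw [if_pos (show m + 1 ≤ m + 1 from le_rfl), if_neg (show ¬ m + 1 ≤ m by omega),
        if_pos rfl]
      linarith [mul_le_mul_of_nonneg_left (steinHead_le_succ hr m) hw]
    · rw [if_neg (show ¬ j ≤ m + 1 by omega), if_neg (show ¬ j ≤ m by omega), if_neg hj.ne']
      linarith [mul_le_mul_of_nonneg_left (steinHead_le_succ hr m) hw]

lemma summable_steinSingleton (r : ℝ≥0) (k : ℕ) : Summable fun j => steinSingleton r j k := by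
  rcases k with _ | k
  · exact summable_zero
  · refine ((summable_measureReal_singleton Po(r)).mul_right
      (|steinTail r k| + |steinHead r k|)).of_norm_bounded fun j => ?_
    rw [steinSingleton, norm_mul, Real.norm_of_nonneg measureReal_nonneg]
    gcongr
    split_ifs <;> simp

noncomputable def steinSolution (r : ℝ≥0) (s : Set ℕ) (k : ℕ) : ℝ :=
  ∑' j, s.indicator (fun j => steinSingleton r j k) j

lemma steinSolution_stein_eq (hr : 0 < r) (s : Set ℕ) (k : ℕ) :
    r * steinSolution r s (k + 1) - k * steinSolution r s k = s.indicator 1 k - Po(r).real s := by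
  have hsum (n : ℕ) := ((summable_steinSingleton r n).indicator s).hasSum
  have hdelta : HasSum (fun j => if j = k then s.indicator 1 k else 0)
      (s.indicator (1 : ℕ → ℝ) k) := hasSum_ite_eq k _
  have hpois : HasSum (fun j => s.indicator (fun j => Po(r).real {j}) j) (Po(r).real s) := by
    rw [measureReal_eq_tsum_indicator]
    exact ((summable_measureReal_singleton _).indicator s).hasSum
  have hpointwise : (fun j => r * s.indicator (fun j => steinSingleton r j (k + 1)) j
      - k * s.indicator (fun j => steinSingleton r j k) j)
      = fun j => (if j = k then s.indicator 1 k else 0)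
        - s.indicator (fun j => Po(r).real {j}) j := by
    ext j
    by_cases hj : j ∈ s
    · simp only [Set.indicator_of_mem hj, steinSingleton_stein_eq hr]
      congr 1
      split_ifs with hjk
      · simp [hjk ▸ hj]
      · rfl
    · simp only [Set.indicator_of_notMem hj, mul_zero, sub_zero]
      split_ifs with hjk
      · simp [hjk ▸ hj]
      · rfl
  have h := ((hsum (k + 1)).mul_left (r : ℝ)).sub ((hsum k).mul_left (k : ℝ))
  rw [hpointwise] at h
  exact h.unique (hdelta.sub hpois)

lemma steinSolution_zero (r : ℝ≥0) (s : Set ℕ) : steinSolution r s 0 = 0 := by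
  simp [steinSolution, steinSingleton]

lemma steinSolution_univ (hr : 0 < r) : steinSolution r Set.univ = 0 := by
  have hr0 : (r : ℝ) ≠ 0 := by positivity
  funext k
  induction k with
  | zero => exact steinSolution_zero r _
  | succ k ih =>
    have h := steinSolution_stein_eq hr Set.univ k
    simp only [ih, Pi.zero_apply, mul_zero, sub_zero, Set.indicator_univ, Pi.one_apply,
      probReal_univ, sub_self, mul_eq_zero, hr0, false_or] at h
    exact h

lemma steinSolution_compl (hr : 0 < r) (s : Set ℕ) (k : ℕ) :
    steinSolution r sᶜ k = -steinSolution r s k := by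
  have hsum := summable_steinSingleton r k
  have h : steinSolution r s k + steinSolution r sᶜ k = steinSolution r Set.univ k := by
    simp only [steinSolution, Set.indicator_univ]
    rw [← (hsum.indicator s).tsum_add (hsum.indicator sᶜ)]
    simp_rw [Set.indicator_self_add_compl_apply]
  rw [steinSolution_univ hr, Pi.zero_apply] at h
  linarith

lemma steinSolution_succ_sub_le (hr : 0 < r) (s : Set ℕ) (k : ℕ) :
    steinSolution r s (k + 1) - steinSolution r s k ≤ 1 / r := by
  have hsum (n : ℕ) := (summable_steinSingleton r n).indicator s
  have hdelta : HasSum (fun j => if j = k then 1 / (r : ℝ) else 0) (1 / r) := hasSum_ite_eq k _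
  rw [steinSolution, steinSolution, ← (hsum _).tsum_sub (hsum _), ← hdelta.tsum_eq]
  refine ((hsum _).sub (hsum _)).tsum_le_tsum (fun j => ?_) hdelta.summable
  by_cases hj : j ∈ s
  · simp only [Set.indicator_of_mem hj]
    exact steinSingleton_succ_sub_le hr j k
  · simp only [Set.indicator_of_notMem hj, sub_zero]
    split_ifs <;> positivity

lemma abs_steinSolution_succ_sub_le (hr : 0 < r) (s : Set ℕ) (k : ℕ) :
    |steinSolution r s (k + 1) - steinSolution r s k| ≤ 1 / r := by
  have hcompl := steinSolution_succ_sub_le hr sᶜ k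
  rw [steinSolution_compl hr, steinSolution_compl hr] at hcompl
  exact abs_le.2 ⟨by linarith, steinSolution_succ_sub_le hr s k⟩

lemma abs_steinSolution_sub_le (hr : 0 < r) (s : Set ℕ) {m n : ℕ} (hmn : m ≤ n) :
    |steinSolution r s n - steinSolution r s m| ≤ (n - m) / r := by
  have h := dist_le_Ico_sum_of_dist_le (f := steinSolution r s) (d := fun _ => 1 / (r : ℝ)) hmn
    fun _ _ => by rw [dist_comm]; exact abs_steinSolution_succ_sub_le hr s _
  rwa [sum_const, Nat.card_Ico, nsmul_eq_mul, Real.dist_eq, abs_sub_comm, Nat.cast_sub hmn,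
    ← div_eq_mul_one_div] at h

end PoissonStein

section SizeBias

variable {Ω Ω' : Type*} [MeasurableSpace Ω] [MeasurableSpace Ω']

lemma measureReal_map_sub_poissonMeasure_eq_integral {μ : Measure Ω} [IsProbabilityMeasure μ]
    {W : Ω → ℕ} (hW : AEMeasurable W μ) {r : ℝ≥0} (hr : 0 < r) (t : Set ℕ) :
    (μ.map W).real t - Po(r).real t
      = ∫ ω, (r * steinSolution r t (W ω + 1) - W ω * steinSolution r t (W ω)) ∂μ := by
  have hind : Integrable (fun ω => t.indicator (1 : ℕ → ℝ) (W ω)) μ :=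
    (integrable_const 1).mono'
      ((Measurable.of_discrete (f := t.indicator 1)).comp_aemeasurable hW).aestronglyMeasurable
      (ae_of_all _ fun ω => (norm_indicator_le_norm_self _ _).trans (by simp))
  simp_rw [steinSolution_stein_eq hr]
  rw [integral_sub hind (integrable_const _), integral_const, probReal_univ, one_smul,
    ← integral_indicator_one .of_discrete,
    integral_map hW Measurable.of_discrete.aestronglyMeasurable]

/-- Chen–Stein bound for a monotone coupling of `W` with its size-biased version `V`. -/
theorem abs_measureReal_map_sub_poissonMeasure_le {μ : Measure Ω} [IsProbabilityMeasure μ]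
    {μ' : Measure Ω'} [IsFiniteMeasure μ'] {W : Ω → ℕ} {W' V : Ω' → ℕ} {N : ℕ}
    (hWN : ∀ᵐ ω ∂μ, W ω ≤ N) (hW' : IdentDistrib W' W μ' μ) (hV : AEMeasurable V μ')
    {r : ℝ≥0} (hr : 0 < r) (hbias : ∀ g : ℕ → ℝ, ∫ ω, W ω * g (W ω) ∂μ = r * ∫ ω, g (V ω) ∂μ')
    (hVW' : ∀ᵐ ω ∂μ', V ω ≤ W' ω + 1) (t : Set ℕ) :
    |(μ.map W).real t - Po(r).real t| ≤ ∫ ω, ((W' ω : ℝ) + 1 - V ω) ∂μ' := by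
  set f := steinSolution r t
  have hW := hW'.aemeasurable_snd
  have hW'N : ∀ᵐ ω ∂μ', W' ω ≤ N := hW'.symm.ae_snd (p := (· ≤ N)) .of_discrete hWN
  have hVN : ∀ᵐ ω ∂μ', V ω ≤ N + 1 := by
    filter_upwards [hW'N, hVW'] with ω h h'
    omega
  have hintW (g : ℕ → ℝ) := integrable_comp_of_ae_le hW hWN g
  have hintW' (g : ℕ → ℝ) := integrable_comp_of_ae_le hW'.aemeasurable_fst hW'N g
  have hintV (g : ℕ → ℝ) := integrable_comp_of_ae_le hV hVN g
  have htransfer : ∫ ω, (r * f (W ω + 1) - W ω * f (W ω)) ∂μ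
      = r * ∫ ω, (f (W' ω + 1) - f (V ω)) ∂μ' := by
    have hlaw : ∫ ω, f (W' ω + 1) ∂μ' = ∫ ω, f (W ω + 1) ∂μ :=
      (hW'.comp (Measurable.of_discrete (f := fun n => f (n + 1)))).integral_eq
    rw [integral_sub ((hintW fun n => f (n + 1)).const_mul _) (hintW fun n => n * f n),
      integral_const_mul, hbias f, integral_sub (hintW' fun n => f (n + 1)) (hintV f), hlaw,
      mul_sub]
  have hpointwise : ∀ᵐ ω ∂μ', |f (W' ω + 1) - f (V ω)| ≤ ((W' ω : ℝ) + 1 - V ω) / r := by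
    filter_upwards [hVW'] with ω h
    simpa using abs_steinSolution_sub_le hr t h
  have hr0 : (r : ℝ) ≠ 0 := by positivity
  rw [measureReal_map_sub_poissonMeasure_eq_integral hW hr, htransfer, abs_mul, NNReal.abs_eq]
  calc (r : ℝ) * |∫ ω, (f (W' ω + 1) - f (V ω)) ∂μ'|
      ≤ r * ∫ ω, ((W' ω : ℝ) + 1 - V ω) / r ∂μ' := by
        gcongr
        refine (abs_integral_le_integral_abs).trans (integral_mono_ae ?_ ?_ hpointwise)
        · exact ((hintW' fun n => f (n + 1)).sub (hintV f)).abs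
        · exact ((hintW' fun n => (n : ℝ) + 1).sub (hintV fun n => (n : ℝ))).div_const _
    _ = ∫ ω, ((W' ω : ℝ) + 1 - V ω) ∂μ' := by rw [integral_div, mul_div_cancel₀ _ hr0]

end SizeBias

section Exchangeable

variable {Ω : Type*} [MeasurableSpace Ω] {μ : Measure Ω} {A : Type*} [Fintype A] {I : A → Ω → ℕ}

lemma integral_mul_comp_sum_eq_of_exchangeable [DecidableEq A] (hmeas : ∀ a, Measurable (I a))
    (hexch : ∀ π : Equiv.Perm A,
      Measure.map (fun ω => fun a => I (π a) ω) μ = Measure.map (fun ω => fun a => I a ω) μ)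
    (a b : A) (g : ℕ → ℝ) :
    ∫ ω, I b ω * g (∑ c, I c ω) ∂μ = ∫ ω, I a ω * g (∑ c, I c ω) ∂μ := by
  have hident : IdentDistrib (fun ω c => I (Equiv.swap a b c) ω) (fun ω c => I c ω) μ μ :=
    ⟨by fun_prop, by fun_prop, hexch _⟩
  have hsum (ω : Ω) : ∑ c, I (Equiv.swap a b c) ω = ∑ c, I c ω :=
    Equiv.sum_comp (Equiv.swap a b) (fun c => I c ω)
  simpa [hsum] using
    (hident.comp (Measurable.of_discrete
      (f := fun v : A → ℕ => (v a : ℝ) * g (∑ c, v c)))).integral_eq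

theorem integral_sum_mul_eq_of_exchangeable [IsFiniteMeasure μ] [DecidableEq A]
    (hmeas : ∀ a, Measurable (I a)) (h01 : ∀ a ω, I a ω ≤ 1)
    (hexch : ∀ π : Equiv.Perm A,
      Measure.map (fun ω => fun a => I (π a) ω) μ = Measure.map (fun ω => fun a => I a ω) μ)
    (a : A) (g : ℕ → ℝ) :
    ∫ ω, (∑ b, I b ω : ℕ) * g (∑ b, I b ω) ∂μ
      = Fintype.card A * μ.real {ω | I a ω = 1} * ∫ ω, g (∑ b, I b ω) ∂μ[|{ω | I a ω = 1}] := by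
  have hint (b : A) : Integrable (fun ω => I b ω * g (∑ c, I c ω)) μ :=
    integrable_comp_of_ae_mem_finite (by fun_prop)
      (Set.Finite.pi' fun _ => Set.finite_Iic 1) (ae_of_all _ fun ω b => h01 b ω)
      (fun v : A → ℕ => (v b : ℝ) * g (∑ c, v c))
  push_cast
  simp_rw [sum_mul]
  rw [integral_finsetSum _ fun b _ => hint b]
  simp_rw [integral_mul_comp_sum_eq_of_exchangeable hmeas hexch a]
  rw [sum_const, card_univ, nsmul_eq_mul, integral_mul_eq_setIntegral (hmeas a) (h01 a),
    setIntegral_eq_measureReal_mul_integral_cond, mul_assoc]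

lemma integral_sum_eq_of_exchangeable [IsFiniteMeasure μ] [DecidableEq A]
    (hmeas : ∀ a, Measurable (I a)) (h01 : ∀ a ω, I a ω ≤ 1)
    (hexch : ∀ π : Equiv.Perm A,
      Measure.map (fun ω => fun a => I (π a) ω) μ = Measure.map (fun ω => fun a => I a ω) μ)
    {a : A} (ha : μ {ω | I a ω = 1} ≠ 0) :
    ∫ ω, ((∑ b, I b ω : ℕ) : ℝ) ∂μ = Fintype.card A * μ.real {ω | I a ω = 1} := by
  have := cond_isProbabilityMeasure ha
  simpa using integral_sum_mul_eq_of_exchangeable hmeas h01 hexch a fun _ => 1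

theorem integral_sum_mul_eq_of_identDistrib_cond [IsFiniteMeasure μ] [DecidableEq A]
    (hmeas : ∀ a, Measurable (I a)) (h01 : ∀ a ω, I a ω ≤ 1)
    (hexch : ∀ π : Equiv.Perm A,
      Measure.map (fun ω => fun a => I (π a) ω) μ = Measure.map (fun ω => fun a => I a ω) μ)
    {a : A} (ha : μ {ω | I a ω = 1} ≠ 0) {Ω' : Type*} [MeasurableSpace Ω'] {μ' : Measure Ω'}
    {J : A → Ω' → ℕ}
    (hJ : IdentDistrib (fun ω b => J b ω) (fun ω b => I b ω) μ' μ[|{ω | I a ω = 1}])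
    (g : ℕ → ℝ) :
    ∫ ω, (∑ b, I b ω : ℕ) * g (∑ b, I b ω) ∂μ
      = (∫ ω, ((∑ b, I b ω : ℕ) : ℝ) ∂μ) * ∫ ω, g (∑ b, J b ω) ∂μ' := by
  rw [integral_sum_mul_eq_of_exchangeable hmeas h01 hexch a,
    integral_sum_eq_of_exchangeable hmeas h01 hexch ha]
  exact congrArg _ (hJ.comp (Measurable.of_discrete
    (f := fun v : A → ℕ => g (∑ b, v b)))).integral_eq.symm

end Exchangeable

section MonotoneCoupling

variable {A : Type*} [Fintype A] [DecidableEq A]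

lemma sum_le_sum_add_one_of_le {x y : A → ℕ} {a : A} (hxa : x a ≤ 1)
    (hle : ∀ b, b ≠ a → x b ≤ y b) : ∑ b, x b ≤ ∑ b, y b + 1 := by
  rw [← sum_erase_add _ _ (mem_univ a), ← sum_erase_add _ _ (mem_univ a)]
  have := sum_le_sum fun b (hb : b ∈ univ.erase a) => hle b (ne_of_mem_erase hb)
  omega

variable {Ω : Type*} [MeasurableSpace Ω] {ν : Measure Ω} {X Y : A → Ω → ℕ}

lemma integral_sum_add_one_sub_sum (hX : ∀ b, Integrable (fun ω => (X b ω : ℝ)) ν)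
    (hY : ∀ b, Integrable (fun ω => (Y b ω : ℝ)) ν) {a : A} (hYa : ∀ᵐ ω ∂ν, Y a ω = 1) :
    ∫ ω, (((∑ b, X b ω : ℕ) : ℝ) + 1 - (∑ b, Y b ω : ℕ)) ∂ν
      = ∫ ω, (X a ω : ℝ) ∂ν + ∑ b ∈ univ.erase a, ∫ ω, ((X b ω : ℝ) - Y b ω) ∂ν := by
  have hdiff (b : A) : Integrable (fun ω => (X b ω : ℝ) - Y b ω) ν := (hX b).sub (hY b)
  rw [← integral_finsetSum _ fun b _ => hdiff b,
    ← integral_add (hX a) (integrable_finsetSum _ fun b _ => hdiff b)]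
  refine integral_congr_ae ?_
  filter_upwards [hYa] with ω hω
  push_cast
  rw [← sum_erase_add _ _ (mem_univ a), ← sum_erase_add _ _ (mem_univ a), hω, sum_sub_distrib]
  push_cast
  ring

end MonotoneCoupling

set_option linter.deprecated false in
lemma poissonPMF_toMeasure (r : ℝ≥0) : (poissonPMF r).toMeasure = Po(r) := by
  refine Measure.ext_iff_singleton.2 fun n => ?_
  rw [PMF.toMeasure_apply_singleton _ _ (measurableSet_singleton n), poissonMeasure_singleton,
    ← poissonPMFReal_ofReal_eq_poissonPMF, poissonPMFReal]

/-- Corollary 4.3, second bound: Chen–Stein with a monotone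
vector-level coupling.  Let `(I_a)_{a ∈ A}` be a finite exchangeable collection of
`{0,1}`-valued random variables with `P(I_a = 1) > 0`, `W = ∑ I_a`, `λ = E[W]`.  Fix
`a ∈ A` and suppose that on some probability space there are random vectors
`(I'_b)_{b ∈ A}` and `(J_b)_{b ∈ A}` whose laws are, respectively, the law of
`(I_b)_b` and its conditional law given `I_a = 1`, and such that almost surely
`J_b ≤ I'_b` for all `b ≠ a`.  Then
`d_TV(W, Poi(λ)) ≤ E[I_a] + ∑_{b ≠ a} E[I'_b - J_b]`. -/
theorem chenStein_monotone_coupling {Ω Ω' : Type*} [MeasurableSpace Ω] [MeasurableSpace Ω']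
    (μ : Measure Ω) [IsProbabilityMeasure μ] (μ' : Measure Ω') [IsProbabilityMeasure μ']
    {A : Type*} [Fintype A] [DecidableEq A] (I : A → Ω → ℕ)
    (hmeas : ∀ a, Measurable (I a))
    (h01 : ∀ a ω, I a ω ≤ 1)
    (hpos : ∀ a, 0 < μ {ω | I a ω = 1})
    (hexch : ∀ π : Equiv.Perm A,
      Measure.map (fun ω => fun a => I (π a) ω) μ = Measure.map (fun ω => fun a => I a ω) μ)
    (a : A) (I' J : A → Ω' → ℕ)
    (hI'meas : ∀ b, Measurable (I' b)) (hJmeas : ∀ b, Measurable (J b))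
    (hlawI : Measure.map (fun ω => fun b => I' b ω) μ' =
      Measure.map (fun ω => fun b => I b ω) μ)
    (hlawJ : Measure.map (fun ω => fun b => J b ω) μ' =
      Measure.map (fun ω => fun b => I b ω) (μ[|{ω | I a ω = 1}]))
    (hdom : ∀ᵐ ω ∂μ', ∀ b, b ≠ a → J b ω ≤ I' b ω) :
    tvDistM (Measure.map (fun ω => ∑ b, I b ω) μ)
        ((poissonPMF (Real.toNNReal (∫ ω, ((∑ b, I b ω : ℕ) : ℝ) ∂μ))).toMeasure) ≤
      (∫ ω, (I a ω : ℝ) ∂μ) +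
        ∑ b ∈ Finset.univ.erase a, ∫ ω, ((I' b ω : ℝ) - (J b ω : ℝ)) ∂μ' := by
  set s := {ω | I a ω = 1}
  have hs : μ s ≠ 0 := (hpos a).ne'
  have hIvec : IdentDistrib (fun ω b => I' b ω) (fun ω b => I b ω) μ' μ :=
    ⟨by fun_prop, by fun_prop, hlawI⟩
  have hJvec : IdentDistrib (fun ω b => J b ω) (fun ω b => I b ω) μ' μ[|s] :=
    ⟨by fun_prop, by fun_prop, hlawJ⟩
  have hJa : ∀ᵐ ω ∂μ', J a ω = 1 := hJvec.symm.ae_snd (p := fun v => v a = 1) .of_discrete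
    (ae_cond_mem (hmeas a (measurableSet_singleton 1)))
  have hcube : {v : A → ℕ | ∀ b, v b ∈ Set.Iic 1}.Finite :=
    Set.Finite.pi' fun _ => Set.finite_Iic 1
  have hmean_pos : 0 < ∫ ω, ((∑ b, I b ω : ℕ) : ℝ) ∂μ := by
    rw [integral_sum_eq_of_exchangeable hmeas h01 hexch hs]
    exact mul_pos (by exact_mod_cast Fintype.card_pos_iff.2 ⟨a⟩)
      (ENNReal.toReal_pos hs (measure_ne_top μ s))
  refine ciSup_le fun t => ?_
  rw [poissonPMF_toMeasure]
  calc _ ≤ ∫ ω, (((∑ b, I' b ω : ℕ) : ℝ) + 1 - (∑ b, J b ω : ℕ)) ∂μ' :=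
        abs_measureReal_map_sub_poissonMeasure_le (N := Fintype.card A)
          (ae_of_all _ fun ω => (sum_le_sum fun b _ => h01 b ω).trans (by simp))
          (hIvec.comp (Measurable.of_discrete (f := fun v : A → ℕ => ∑ b, v b))) (by fun_prop)
          (Real.toNNReal_pos.2 hmean_pos)
          (fun g => by
            rw [Real.coe_toNNReal _ hmean_pos.le]
            exact integral_sum_mul_eq_of_identDistrib_cond hmeas h01 hexch hs hJvec g)
          (by filter_upwards [hJa, hdom] with ω h1 h2; exact sum_le_sum_add_one_of_le h1.le h2) t
    _ = _ := by
        rw [integral_sum_add_one_sub_sum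
          (fun b => hIvec.integrable_comp_of_ae_mem_finite hcube (ae_of_all _ fun ω b => h01 b ω)
            fun v => (v b : ℝ))
          (fun b => hJvec.integrable_comp_of_ae_mem_finite hcube (ae_of_all _ fun ω b => h01 b ω)
            fun v => (v b : ℝ)) hJa]
        exact congrArg (· + _)
          (hIvec.comp (Measurable.of_discrete (f := fun v : A → ℕ => (v a : ℝ)))).integral_eq
end

section
/- Fix n ≥ 2 and integers k, m with 1 ≤ k ≤ n−1 and 1 ≤ m ≤ n−k. Let X = (X_1,…,X_{n−1}) have independent coordinates with X_i ~ Bernoulli(1/i), and let X^k be a random vector distributed as X conditioned on the event {Σ_{i=k}^{n−1} X_i ≥ m} (which has positive probability). Then there exists a coupling of X and X^k, i.e. a pair of random vectors on a common probability space with these marginal laws, such that almost surely X_i ≤ X^k_i for every i ∈ [n−1]. -/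
open MeasureTheory ProbabilityTheory
open scoped ENNReal NNReal

/-! Induction on the number of coordinates. Let `Z` be the mass of the increasing event `A` and
`Z_b` the mass of its slice at first coordinate `b`. If the first coordinate is `Ber q`, then
conditioned on `A` it is `Ber(q Z_true / Z)`; the slice at `false` lies inside the slice at
`true`, so `Z ≤ Z_true` and this law dominates `Ber q`, which lets the first coordinates be
coupled monotonically. Given the upper first coordinate `b`, the conditioned tail is the product
law conditioned on the slice at `b`, an increasing event again, and is coupled with the
unconditioned tail by induction. -/

/-- The law of the vector `X = (X_1, …, X_{n-1})` of independent Bernoulli variables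
with `X_i ~ Ber(1/i)`; coordinate `j : Fin (n-1)` stands for `X_{j+1}`. -/
noncomputable def bernoulliVec (n : ℕ) : Measure (∀ _ : Fin (n - 1), Bool) :=
  Measure.pi fun j : Fin (n - 1) =>
    (PMF.bernoulli (((j : ℕ) + 1 : NNReal))⁻¹ (inv_le_one_of_one_le₀ le_add_self)).toMeasure

/-- The event `{Σ_{i=k}^{n-1} X_i ≥ m}`. -/
def tailSumEvent (n k m : ℕ) : Set (∀ _ : Fin (n - 1), Bool) :=
  {x | m ≤ (Finset.univ.filter fun j : Fin (n - 1) => k ≤ (j : ℕ) + 1 ∧ x j = true).card}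

structure IsMonotoneCoupling {α : Type*} [Fintype α] [LE α] (π : α → α → ℝ≥0)
    (μ ν : α → ℝ≥0) : Prop where
  le_of_ne_zero : ∀ x y, π x y ≠ 0 → x ≤ y
  sum_snd : ∀ x, ∑ y, π x y = μ x
  sum_fst : ∀ y, ∑ x, π x y = ν y

theorem IsMonotoneCoupling.diagonal {α : Type*} [Fintype α] [Preorder α] [DecidableEq α]
    (μ : α → ℝ≥0) : IsMonotoneCoupling (fun x y => if x = y then μ x else 0) μ μ where
  le_of_ne_zero x y h := by
    by_cases hxy : x = y
    exacts [hxy.le, absurd (if_neg hxy) h]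
  sum_snd x := by simp
  sum_fst y := by simp

theorem exists_isMonotoneCoupling_bool {μ ν : Bool → ℝ≥0} (hle : μ true ≤ ν true)
    (hsum : μ true + μ false = ν true + ν false) : ∃ π, IsMonotoneCoupling π μ ν := by
  refine ⟨fun a b => cond a (cond b (μ true) 0) (cond b (ν true - μ true) (ν false)),
    ⟨?_, ?_, ?_⟩⟩
  · rintro (_ | _) (_ | _) h <;> simp_all
  · rintro (_ | _)
    · simp only [Fintype.sum_bool, cond_true, cond_false]
      rw [tsub_add_eq_add_tsub hle, ← hsum, add_tsub_cancel_left]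
    · simp
  · rintro (_ | _)
    · simp
    · simp [add_tsub_cancel_of_le hle]

theorem sum_fin_tuple_succ {β M : Type*} [Fintype β] [AddCommMonoid M] {d : ℕ}
    (f : (Fin (d + 1) → β) → M) : ∑ X, f X = ∑ b, ∑ x, f (Fin.cons b x) := by
  rw [← Fintype.sum_prod_type']
  exact (Fintype.sum_equiv (Fin.consEquiv fun _ => β) _ _ fun _ => rfl).symm

/-- The plan for the tails is chosen by the upper head `Y 0`; this is possible because the lower
tail law `μ` does not depend on the head. -/
theorem IsMonotoneCoupling.cons {β : Type*} [Fintype β] [Preorder β] {d : ℕ}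
    {σ : β → β → ℝ≥0} {μ₀ ν₀ : β → ℝ≥0} (hσ : IsMonotoneCoupling σ μ₀ ν₀)
    {π : β → (Fin d → β) → (Fin d → β) → ℝ≥0} {μ : (Fin d → β) → ℝ≥0}
    {ν : β → (Fin d → β) → ℝ≥0} (hπ : ∀ b, IsMonotoneCoupling (π b) μ (ν b)) :
    IsMonotoneCoupling
      (fun X Y : Fin (d + 1) → β => σ (X 0) (Y 0) * π (Y 0) (Fin.tail X) (Fin.tail Y))
      (fun X : Fin (d + 1) → β => μ₀ (X 0) * μ (Fin.tail X))
      (fun Y : Fin (d + 1) → β => ν₀ (Y 0) * ν (Y 0) (Fin.tail Y)) where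
  le_of_ne_zero X Y h := by
    rw [← Fin.cons_self_tail X, ← Fin.cons_self_tail Y, Fin.cons_le_cons]
    exact ⟨hσ.le_of_ne_zero _ _ (left_ne_zero_of_mul h),
      (hπ _).le_of_ne_zero _ _ (right_ne_zero_of_mul h)⟩
  sum_snd X := by
    simp only [sum_fin_tuple_succ, Fin.cons_zero, Fin.tail_cons, ← Finset.mul_sum,
      (hπ _).sum_snd, ← Finset.sum_mul, hσ.sum_snd]
  sum_fst Y := by
    simp only [sum_fin_tuple_succ, Fin.cons_zero, Fin.tail_cons, ← Finset.mul_sum,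
      (hπ _).sum_fst, ← Finset.sum_mul, hσ.sum_fst]

section Weights

variable {α : Type*} [Fintype α]

noncomputable def massOn (w : α → ℝ≥0) (A : Set α) : ℝ≥0 :=
  ∑ x, A.indicator w x

/-- Vanishes identically when `A` carries no mass, as `0⁻¹ = 0`. -/
noncomputable def condWeight (w : α → ℝ≥0) (A : Set α) (y : α) : ℝ≥0 :=
  (massOn w A)⁻¹ * A.indicator w y

theorem massOn_mono (w : α → ℝ≥0) {A B : Set α} (h : A ⊆ B) : massOn w A ≤ massOn w B :=
  Finset.sum_le_sum fun x _ => Set.indicator_le_indicator_of_subset h (fun _ => zero_le) x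

theorem massOn_pos_of_mem {w : α → ℝ≥0} {A : Set α} {x : α} (hx : x ∈ A) (hw : 0 < w x) :
    0 < massOn w A :=
  calc 0 < A.indicator w x := by rwa [Set.indicator_of_mem hx]
    _ ≤ massOn w A := Finset.single_le_sum (fun _ _ => zero_le) (Finset.mem_univ x)

theorem condWeight_eq_one_of_subsingleton [Subsingleton α] {w : α → ℝ≥0} {A : Set α}
    (h : 0 < massOn w A) : condWeight w A = 1 := by
  funext y
  have hy : massOn w A = A.indicator w y := Fintype.sum_subsingleton _ y
  rw [condWeight, Pi.one_apply, ← hy, inv_mul_cancel₀ h.ne']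

end Weights

def bernoulliWeight (q : ℝ≥0) (b : Bool) : ℝ≥0 :=
  cond b q (1 - q)

def productWeight {d : ℕ} (p : Fin d → ℝ≥0) (x : Fin d → Bool) : ℝ≥0 :=
  ∏ j, bernoulliWeight (p j) (x j)

def consSlice {d : ℕ} (A : Set (Fin (d + 1) → Bool)) (b : Bool) : Set (Fin d → Bool) :=
  {x | Fin.cons b x ∈ A}

section ProductWeight

variable {d : ℕ} (p : Fin (d + 1) → ℝ≥0) (A : Set (Fin (d + 1) → Bool))

theorem productWeight_succ (x : Fin (d + 1) → Bool) :
    productWeight p x = bernoulliWeight (p 0) (x 0) * productWeight (Fin.tail p) (Fin.tail x) :=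
  Fin.prod_univ_succ _

theorem indicator_productWeight_cons (b : Bool) (y : Fin d → Bool) :
    A.indicator (productWeight p) (Fin.cons b y) =
      bernoulliWeight (p 0) b * (consSlice A b).indicator (productWeight (Fin.tail p)) y := by
  by_cases h : Fin.cons b y ∈ A
  · rw [Set.indicator_of_mem h, Set.indicator_of_mem (show y ∈ consSlice A b from h),
      productWeight_succ, Fin.cons_zero, Fin.tail_cons]
  · rw [Set.indicator_of_notMem h, Set.indicator_of_notMem (show y ∉ consSlice A b from h),
      mul_zero]

theorem massOn_productWeight_succ :
    massOn (productWeight p) A =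
      ∑ b, bernoulliWeight (p 0) b * massOn (productWeight (Fin.tail p)) (consSlice A b) := by
  simp only [massOn, sum_fin_tuple_succ, indicator_productWeight_cons, Finset.mul_sum]

theorem massOn_productWeight_le_massOn_consSlice_true (hp : p 0 ≤ 1) (hA : IsUpperSet A) :
    massOn (productWeight p) A ≤
      massOn (productWeight (Fin.tail p)) (consSlice A true) := by
  set Z := fun b => massOn (productWeight (Fin.tail p)) (consSlice A b)
  have hZ : Z false ≤ Z true :=
    massOn_mono _ fun x hx => hA (Fin.cons_le_cons.mpr ⟨Bool.false_le _, le_rfl⟩) hx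
  calc massOn (productWeight p) A = p 0 * Z true + (1 - p 0) * Z false := by
        rw [massOn_productWeight_succ, Fintype.sum_bool]; rfl
    _ ≤ p 0 * Z true + (1 - p 0) * Z true := by gcongr
    _ = Z true := by rw [← add_mul, add_tsub_cancel_of_le hp, one_mul]

theorem condWeight_productWeight_cons (b : Bool) (y : Fin d → Bool) :
    condWeight (productWeight p) A (Fin.cons b y) =
      bernoulliWeight (p 0) b * massOn (productWeight (Fin.tail p)) (consSlice A b) /
          massOn (productWeight p) A *
        condWeight (productWeight (Fin.tail p)) (consSlice A b) y := by
  rw [condWeight, condWeight, indicator_productWeight_cons]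
  rcases eq_or_ne (massOn (productWeight (Fin.tail p)) (consSlice A b)) 0 with h | h
  · have hy := Finset.sum_eq_zero_iff.mp h y (Finset.mem_univ y)
    simp [hy, h]
  · field_simp

end ProductWeight

theorem isUpperSet_consSlice {d : ℕ} {A : Set (Fin (d + 1) → Bool)} (hA : IsUpperSet A)
    (b : Bool) : IsUpperSet (consSlice A b) :=
  fun _ _ hxy hx => hA (Fin.cons_le_cons.mpr ⟨le_rfl, hxy⟩) hx

theorem exists_isMonotoneCoupling_productWeight_condWeight :
    ∀ {d : ℕ} (p : Fin d → ℝ≥0), (∀ j, p j ≤ 1) → ∀ A : Set (Fin d → Bool), IsUpperSet A →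
      0 < massOn (productWeight p) A →
      ∃ π, IsMonotoneCoupling π (productWeight p) (condWeight (productWeight p) A)
  | 0, p, _, A, _, hpos => by
    have hone : productWeight p = 1 := funext fun _ => Fin.prod_univ_zero _
    rw [condWeight_eq_one_of_subsingleton hpos, hone]
    exact ⟨_, .diagonal 1⟩
  | d + 1, p, hp, A, hA, hpos => by
    set Z := massOn (productWeight p) A
    set Zb := fun b => massOn (productWeight (Fin.tail p)) (consSlice A b)
    set κ := fun b => bernoulliWeight (p 0) b * Zb b / Z
    obtain ⟨σ, hσ⟩ : ∃ σ, IsMonotoneCoupling σ (bernoulliWeight (p 0)) κ := by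
      refine exists_isMonotoneCoupling_bool ?_ ?_
      · rw [le_div_iff₀ hpos]
        gcongr
        exact massOn_productWeight_le_massOn_consSlice_true p A (hp 0) hA
      · have hZ : Z = ∑ b, bernoulliWeight (p 0) b * Zb b := massOn_productWeight_succ p A
        rw [Fintype.sum_bool] at hZ
        rw [← add_div, ← hZ, div_self hpos.ne']
        exact add_tsub_cancel_of_le (hp 0)
    have hslice : ∀ b, ∃ ν π, IsMonotoneCoupling π (productWeight (Fin.tail p)) ν ∧
        ∀ y, κ b * ν y = condWeight (productWeight p) A (Fin.cons b y) := by
      intro b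
      simp_rw [condWeight_productWeight_cons]
      rcases eq_zero_or_pos (Zb b) with h | h
      · exact ⟨_, _, .diagonal _, fun y => by simp [κ, Zb, Z] at h ⊢; simp [h]⟩
      · obtain ⟨π, hπ⟩ := exists_isMonotoneCoupling_productWeight_condWeight (Fin.tail p)
          (fun _ => hp _) _ (isUpperSet_consSlice hA b) h
        exact ⟨_, π, hπ, fun y => rfl⟩
    choose ν π hπ hν using hslice
    exact ⟨_, by simpa only [← productWeight_succ, hν, Fin.cons_self_tail] using hσ.cons hπ⟩

section Measures

variable {α : Type*} [Fintype α] [MeasurableSpace α] [MeasurableSingletonClass α]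

theorem measure_eq_sum_indicator_singleton (μ : Measure α) (s : Set α) :
    μ s = ∑ x, s.indicator (fun x => μ {x}) x := by
  classical
  simp only [Set.indicator_apply, ← Finset.sum_filter, sum_measure_singleton]
  congr
  ext
  simp

theorem cond_singleton_eq_condWeight {μ : Measure α} {w : α → ℝ≥0} (hμ : ∀ x, μ {x} = w x)
    {A : Set α} (hA : massOn w A ≠ 0) (y : α) : μ[|A] {y} = condWeight w A y := by
  have hmass : ∀ s, μ s = massOn w s := fun s => by
    simp only [measure_eq_sum_indicator_singleton μ s, hμ, massOn, ENNReal.ofNNReal_finsetSum,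
      ENNReal.coe_indicator]
  have hinter : μ (A ∩ {y}) = A.indicator w y := by
    rw [hmass, massOn, Set.inter_comm, ← Set.indicator_indicator, Fintype.sum_eq_single y]
    · simp
    · intro x hx
      simp [hx]
  rw [cond_apply A.toFinite.measurableSet, hmass, hinter, condWeight, ENNReal.coe_mul,
    ENNReal.coe_inv hA]

end Measures

theorem IsMonotoneCoupling.exists_coupling {α : Type} [Fintype α] [MeasurableSpace α]
    [MeasurableSingletonClass α] [LE α] {π : α → α → ℝ≥0} {w v : α → ℝ≥0}
    (h : IsMonotoneCoupling π w v) {μ ν : Measure α} [IsProbabilityMeasure μ]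
    (hμ : ∀ x, μ {x} = w x) (hν : ∀ y, ν {y} = v y) :
    ∃ (Ω : Type) (_ : MeasurableSpace Ω) (P : Measure Ω) (_ : IsProbabilityMeasure P)
      (X Y : Ω → α), Measurable X ∧ Measurable Y ∧ P.map X = μ ∧ P.map Y = ν ∧
        ∀ᵐ ω ∂P, X ω ≤ Y ω := by
  classical
  have hsum : ∑ z : α × α, (π z.1 z.2 : ℝ≥0∞) = 1 :=
    calc ∑ z : α × α, (π z.1 z.2 : ℝ≥0∞) = ∑ x, μ {x} := by
          simp only [Fintype.sum_prod_type, hμ, ← h.sum_snd, ENNReal.ofNNReal_finsetSum]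
      _ = 1 := by rw [sum_measure_singleton, Finset.coe_univ, measure_univ]
  set P := PMF.ofFintype _ hsum
  have hP : ∀ z, P z = π z.1 z.2 := PMF.ofFintype_apply hsum
  refine ⟨α × α, inferInstance, P.toMeasure, inferInstance, Prod.fst, Prod.snd,
    measurable_fst, measurable_snd, ?_, ?_, ?_⟩
  · refine Measure.ext_iff_singleton.mpr fun x => ?_
    rw [Measure.map_apply measurable_fst (measurableSet_singleton x), hμ,
      PMF.toMeasure_apply_fintype, Fintype.sum_prod_type]
    simp [Set.indicator_apply, hP, ← h.sum_snd x]
  · refine Measure.ext_iff_singleton.mpr fun y => ?_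
    rw [Measure.map_apply measurable_snd (measurableSet_singleton y), hν,
      PMF.toMeasure_apply_fintype, Fintype.sum_prod_type]
    simp [Set.indicator_apply, hP, ← h.sum_fst y]
  · rw [ae_iff, PMF.toMeasure_apply_eq_zero_iff _ (Set.toFinite _).measurableSet]
    refine Set.disjoint_left.mpr fun z hz hzle => hzle (h.le_of_ne_zero _ _ ?_)
    simpa [PMF.mem_support_iff, hP] using hz

theorem bernoulliVec_singleton (n : ℕ) (x : Fin (n - 1) → Bool) :
    bernoulliVec n {x} = productWeight (fun j => ((j : ℕ) + 1 : ℝ≥0)⁻¹) x := by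
  rw [bernoulliVec, ← Set.univ_pi_singleton x, Measure.pi_pi, productWeight,
    ENNReal.ofNNReal_finsetProd]
  refine Finset.prod_congr rfl fun j _ => ?_
  rw [PMF.toMeasure_apply_singleton _ _ (measurableSet_singleton _), PMF.bernoulli,
    PMF.ofFintype_apply, bernoulliWeight]
  cases x j <;> rfl

instance (n : ℕ) : IsProbabilityMeasure (bernoulliVec n) := by
  unfold bernoulliVec
  infer_instance

theorem isUpperSet_tailSumEvent (n k m : ℕ) : IsUpperSet (tailSumEvent n k m) :=
  fun _ _ hxy hx => hx.trans <| Finset.card_le_card fun j hj => by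
    simp only [Finset.mem_filter] at hj ⊢
    exact ⟨hj.1, hj.2.1, Bool.le_iff_imp.mp (hxy j) hj.2.2⟩

theorem const_true_mem_tailSumEvent {n k m : ℕ} (hk : 1 ≤ k) (hm : m ≤ n - k) :
    (fun _ => true) ∈ tailSumEvent n k m := by
  have hlow : (Finset.univ.filter fun j : Fin (n - 1) => ¬(k ≤ (j : ℕ) + 1 ∧ true = true)).card
      = min (n - 1) (k - 1) := by
    rw [← Fin.card_filter_val_lt]
    congr
    ext j
    simp only [and_true, not_le]
    omega
  have := Finset.card_filter_add_card_filter_not (s := Finset.univ)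
    (fun j : Fin (n - 1) => k ≤ (j : ℕ) + 1 ∧ true = true)
  rw [Finset.card_univ, Fintype.card_fin] at this
  show m ≤ (Finset.univ.filter fun j : Fin (n - 1) => k ≤ (j : ℕ) + 1 ∧ true = true).card
  omega

theorem bernoulli_conditional_coupling_general (n k m : ℕ)
    (hk1 : 1 ≤ k) (hm2 : m ≤ n - k) :
    ∃ (Ω : Type) (_ : MeasurableSpace Ω) (P : Measure Ω) (_ : IsProbabilityMeasure P)
      (X Y : Ω → ∀ _ : Fin (n - 1), Bool),
        Measurable X ∧ Measurable Y ∧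
        Measure.map X P = bernoulliVec n ∧
        Measure.map Y P = (bernoulliVec n)[|tailSumEvent n k m] ∧
        ∀ᵐ ω ∂P, ∀ j : Fin (n - 1), X ω j = true → Y ω j = true := by
  set p : Fin (n - 1) → ℝ≥0 := fun j => ((j : ℕ) + 1 : ℝ≥0)⁻¹
  have hp : ∀ j, p j ≤ 1 := fun _ => inv_le_one_of_one_le₀ le_add_self
  have hpos : 0 < massOn (productWeight p) (tailSumEvent n k m) :=
    massOn_pos_of_mem (const_true_mem_tailSumEvent hk1 hm2)
      (Finset.prod_pos fun j _ => inv_pos.mpr (Nat.cast_add_one_pos _))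
  obtain ⟨π, hπ⟩ := exists_isMonotoneCoupling_productWeight_condWeight p hp _
    (isUpperSet_tailSumEvent n k m) hpos
  obtain ⟨Ω, _, P, _, X, Y, hX, hY, hXlaw, hYlaw, hXY⟩ := hπ.exists_coupling
    (bernoulliVec_singleton n) (cond_singleton_eq_condWeight (bernoulliVec_singleton n) hpos.ne')
  exact ⟨Ω, _, P, ‹_›, X, Y, hX, hY, hXlaw, hYlaw,
    hXY.mono fun ω h j => Bool.le_iff_imp.mp (h j)⟩

/-- Lemma 5.3: monotone coupling of a Bernoulli vector with its
conditioned version.  Fix `n ≥ 2`, `1 ≤ k ≤ n-1` and `1 ≤ m ≤ n-k`.  Let `X` have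
independent coordinates `X_i ~ Ber(1/i)` and let `X^k` be distributed as `X`
conditioned on `{Σ_{i=k}^{n-1} X_i ≥ m}` (an event of positive probability).  Then
there is a coupling of `X` and `X^k` such that almost surely `X_i ≤ X^k_i` for
every `i`. -/
theorem bernoulli_conditional_coupling (n k m : ℕ) (hn : 2 ≤ n)
    (hk1 : 1 ≤ k) (hk2 : k ≤ n - 1) (hm1 : 1 ≤ m) (hm2 : m ≤ n - k) :
    ∃ (Ω : Type) (_ : MeasurableSpace Ω) (P : Measure Ω) (_ : IsProbabilityMeasure P)
      (X Y : Ω → ∀ _ : Fin (n - 1), Bool),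
        Measurable X ∧ Measurable Y ∧
        Measure.map X P = bernoulliVec n ∧
        Measure.map Y P = (bernoulliVec n)[|tailSumEvent n k m] ∧
        ∀ᵐ ω ∂P, ∀ j : Fin (n - 1), X ω j = true → Y ω j = true :=
  bernoulli_conditional_coupling_general n k m hk1 hm2
end

section
/- Let c ∈ (0,2) and 0 < ε ≤ 1 − c/2, and set a = 1 − ε − c/2. For each n ≥ 2 let (B_j), for integers j with n^a < j ≤ n, be independent random variables with B_j ~ Bernoulli(2/j) (n is taken large enough that every such j is ≥ 2). Then there is a constant C > 0 such that for all sufficiently large n, P( Σ_{n^a < j ≤ n} B_j ≤ c·ln n ) ≤ C·n^{−ε²/(ε + c/2)}. -/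
/-!
Chernoff: for the sum `S` of independent Bernoulli variables and `t ≥ 0`,
`P(S ≤ x) ≤ e^{tx} E[e^{-tS}] ≤ exp(tx - (1 - e^{-t}) E S)`. Comparison with the harmonic
numbers gives `E S = ∑_{n^a < j ≤ n} 2/j ≥ (c + 2ε) log n - 2`, and at `t = 2ε/(c + 2ε)` the bound
`1 - e^{-t} ≥ t - t²/2` turns the exponent into `-(ε²/(ε + c/2)) log n + 1`.
-/

open MeasureTheory ProbabilityTheory Real Finset

lemma sum_Ioc_inv_eq_harmonic_sub {m n : ℕ} (hmn : m ≤ n) :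
    ∑ j ∈ Ioc m n, (j : ℝ)⁻¹ = harmonic n - harmonic m := by
  have hIcc (k : ℕ) : Icc 1 k = Ioc 0 k := Icc_add_one_left_eq_Ioc 0 k
  simp only [harmonic_eq_sum_Icc, hIcc, Rat.cast_sum, Rat.cast_inv, Rat.cast_natCast]
  rw [eq_sub_iff_add_eq', sum_Ioc_consecutive _ m.zero_le hmn]

lemma log_sub_log_sub_one_le_sum_Ioc_floor_inv {y : ℝ} (hy : 1 ≤ y) {n : ℕ} (hyn : y ≤ n) :
    log n - log y - 1 ≤ ∑ j ∈ Ioc ⌊y⌋₊ n, (j : ℝ)⁻¹ := by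
  rw [sum_Ioc_inv_eq_harmonic_sub (Nat.floor_le_of_le hyn)]
  have hlog : log n ≤ log ↑(n + 1) := log_le_log (by linarith) (by push_cast; linarith)
  linarith [log_add_one_le_harmonic n, harmonic_floor_le_one_add_log y hy]

lemma filter_Icc_lt_eq_Ioc_floor {x : ℝ} (hx : 0 ≤ x) (n : ℕ) :
    (Icc 1 n).filter (fun j : ℕ => x < j) = Ioc ⌊x⌋₊ n := by
  ext j
  simp only [mem_filter, mem_Icc, mem_Ioc, ← Nat.floor_lt hx]
  omega

lemma two_mul_one_sub_mul_log_sub_two_le_sum {a : ℝ} (ha₀ : 0 ≤ a) (ha₁ : a ≤ 1) {n : ℕ}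
    (hn : 1 ≤ n) :
    2 * (1 - a) * log n - 2
      ≤ ∑ j ∈ (Icc 1 n).filter (fun j : ℕ => (n : ℝ) ^ a < j), 2 / (j : ℝ) := by
  have hn' : (1 : ℝ) ≤ n := by exact_mod_cast hn
  have hharm := log_sub_log_sub_one_le_sum_Ioc_floor_inv (one_le_rpow hn' ha₀)
    (rpow_le_self_of_one_le hn' ha₁)
  rw [log_rpow (by linarith)] at hharm
  rw [filter_Icc_lt_eq_Ioc_floor (by positivity)]
  simp only [div_eq_mul_inv, ← mul_sum]
  linarith

section
variable {Ω : Type*} [MeasurableSpace Ω] {μ : Measure Ω} [IsProbabilityMeasure μ]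

lemma mgf_ite_one_zero {X : Ω → Bool} (hX : Measurable X) (t : ℝ) :
    mgf (fun ω => if X ω then (1 : ℝ) else 0) μ t
      = 1 + μ.real {ω | X ω = true} * (exp t - 1) := by
  have hE : MeasurableSet {ω | X ω = true} := hX (measurableSet_singleton true)
  have hexp : (fun ω => exp (t * if X ω then (1 : ℝ) else 0))
      = fun ω => {ω | X ω = true}.indicator (fun _ => exp t - 1) ω + 1 := by
    funext ω
    by_cases h : X ω <;> simp [h]
  rw [mgf, hexp, integral_add ((integrable_const _).indicator hE) (integrable_const 1),
    integral_indicator_const _ hE]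
  simp only [smul_eq_mul, integral_const, probReal_univ]
  ring

lemma measure_sum_ite_le_le_exp {ι : Type*} [Fintype ι] {X : ι → Ω → Bool}
    (hmeas : ∀ i, Measurable (X i)) (hindep : iIndepFun X μ) {t : ℝ} (ht : 0 ≤ t) (x : ℝ) :
    μ.real {ω | ∑ i, (if X i ω then (1 : ℝ) else 0) ≤ x}
      ≤ exp (t * x - (1 - exp (-t)) * ∑ i, μ.real {ω | X i ω = true}) := by
  set Y : ι → Ω → ℝ := fun i ω => if X i ω then 1 else 0
  have hYmeas (i : ι) : Measurable (Y i) :=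
    Measurable.ite (hmeas i (measurableSet_singleton true)) measurable_const measurable_const
  have hY : iIndepFun Y μ := hindep.comp (fun _ b => if b then (1 : ℝ) else 0)
    (fun _ => measurable_from_top)
  have hint : Integrable (fun ω => exp (-t * ∑ i, Y i ω)) μ := by
    refine Integrable.mono' (integrable_const 1) (by fun_prop) (ae_of_all _ fun ω => ?_)
    rw [norm_of_nonneg (exp_pos _).le, exp_le_one_iff]
    exact mul_nonpos_of_nonpos_of_nonneg (by linarith) (sum_nonneg fun i _ => by positivity)
  have hfactor (i : ι) :
      mgf (Y i) μ (-t) ≤ exp (-((1 - exp (-t)) * μ.real {ω | X i ω = true})) := by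
    rw [mgf_ite_one_zero (hmeas i)]
    linarith [add_one_le_exp (-((1 - exp (-t)) * μ.real {ω | X i ω = true}))]
  calc μ.real {ω | ∑ i, Y i ω ≤ x}
      ≤ exp (- -t * x) * mgf (fun ω => ∑ i, Y i ω) μ (-t) :=
        measure_le_le_exp_mul_mgf x (neg_nonpos.2 ht) hint
    _ ≤ exp (t * x) * ∏ i, exp (-((1 - exp (-t)) * μ.real {ω | X i ω = true})) := by
        rw [neg_neg, ← sum_fn, hY.mgf_sum hYmeas]
        exact mul_le_mul_of_nonneg_left
          (prod_le_prod (fun _ _ => mgf_nonneg) fun i _ => hfactor i) (exp_pos _).le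
    _ = _ := by rw [← exp_sum, ← exp_add, sum_neg_distrib, mul_sum, ← sub_eq_add_neg]
end

lemma exp_neg_le_one_sub_add_sq_div_two {t : ℝ} (ht : 0 ≤ t) :
    exp (-t) ≤ 1 - t + t ^ 2 / 2 := by
  have hcubic := sum_le_exp_of_nonneg ht 4
  norm_num [sum_range_succ, Nat.factorial] at hcubic
  rw [exp_neg, inv_le_iff_one_le_mul₀' (exp_pos t)]
  nlinarith [mul_le_mul_of_nonneg_right hcubic (show 0 ≤ 1 - t + t ^ 2 / 2 by nlinarith),
    pow_nonneg ht 3, pow_nonneg ht 4, pow_nonneg ht 5]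

lemma chernoff_exponent_le {c ε L M : ℝ} (hc : 0 ≤ c) (hε : 0 < ε) (hM₀ : 0 ≤ M)
    (hM : (c + 2 * ε) * L - 2 ≤ M) :
    2 * ε / (c + 2 * ε) * (c * L) - (1 - exp (-(2 * ε / (c + 2 * ε)))) * M
      ≤ -(ε ^ 2 / (ε + c / 2)) * L + 1 := by
  set t := 2 * ε / (c + 2 * ε) with ht
  have ht₀ : 0 ≤ t := by positivity
  have ht₁ : t ≤ 1 := (div_le_one (by positivity)).2 (by linarith)
  have hq : t - t ^ 2 / 2 ≤ 1 - exp (-t) := by linarith [exp_neg_le_one_sub_add_sq_div_two ht₀]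
  have hq₀ : 0 ≤ t - t ^ 2 / 2 := by nlinarith
  have hgain : t * c - (t - t ^ 2 / 2) * (c + 2 * ε) = -(ε ^ 2 / (ε + c / 2)) := by
    rw [ht]; field_simp; ring
  calc t * (c * L) - (1 - exp (-t)) * M
      ≤ t * (c * L) - (t - t ^ 2 / 2) * ((c + 2 * ε) * L - 2) := by
        nlinarith [mul_le_mul_of_nonneg_right hq hM₀, mul_le_mul_of_nonneg_left hM hq₀]
    _ = (t * c - (t - t ^ 2 / 2) * (c + 2 * ε)) * L + 2 * (t - t ^ 2 / 2) := by ring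
    _ ≤ -(ε ^ 2 / (ε + c / 2)) * L + 1 := by rw [hgain]; nlinarith [sq_nonneg (1 - t)]

theorem selection_set_lower_tail_general (c ε : ℝ) (hc0 : 0 < c)
    (hε0 : 0 < ε) (hε1 : ε ≤ 1 - c / 2) :
    ∃ C : ℝ, 0 < C ∧ ∃ N : ℕ, ∀ n : ℕ, N ≤ n →
      ∀ (Ω : Type) (_ : MeasurableSpace Ω) (μ : Measure Ω), IsProbabilityMeasure μ →
      ∀ B : ℕ → Ω → Bool,
        (∀ j ∈ (Finset.Icc 1 n).filter
            (fun j : ℕ => (n : ℝ) ^ ((1 : ℝ) - ε - c / 2) < (j : ℝ)), Measurable (B j)) →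
        iIndepFun (m := fun _ => ⊤)
          (fun j : ((Finset.Icc 1 n).filter
              (fun j : ℕ => (n : ℝ) ^ ((1 : ℝ) - ε - c / 2) < (j : ℝ))) => B j) μ →
        (∀ j ∈ (Finset.Icc 1 n).filter
            (fun j : ℕ => (n : ℝ) ^ ((1 : ℝ) - ε - c / 2) < (j : ℝ)),
          μ {ω | B j ω = true} = ENNReal.ofReal (2 / (j : ℝ))) →
        (μ {ω | (∑ j ∈ (Finset.Icc 1 n).filter
              (fun j : ℕ => (n : ℝ) ^ ((1 : ℝ) - ε - c / 2) < (j : ℝ)),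
            (if B j ω then (1 : ℝ) else 0)) ≤ c * Real.log n}).toReal ≤
          C * (n : ℝ) ^ (-(ε ^ 2 / (ε + c / 2))) := by
  refine ⟨exp 1, exp_pos 1, 1, fun n hn Ω _ μ _ B hB hindep hprob => ?_⟩
  set s := (Icc 1 n).filter (fun j : ℕ => (n : ℝ) ^ ((1 : ℝ) - ε - c / 2) < j)
  have hprob_real : ∀ j ∈ s, μ.real {ω | B j ω = true} = 2 / j := fun j hj => by
    rw [measureReal_def, hprob j hj, ENNReal.toReal_ofReal (by positivity)]
  have hmass : (c + 2 * ε) * log n - 2 ≤ ∑ j ∈ s, μ.real {ω | B j ω = true} := by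
    rw [sum_congr rfl hprob_real]
    convert two_mul_one_sub_mul_log_sub_two_le_sum (a := 1 - ε - c / 2)
      (by linarith) (by linarith) hn using 2
    ring
  rw [← sum_coe_sort s] at hmass
  have htail := measure_sum_ite_le_le_exp (X := fun j : s => B j) (fun j => hB j j.2) hindep
    (t := 2 * ε / (c + 2 * ε)) (by positivity) (c * log n)
  simp only [← sum_coe_sort s]
  calc μ.real _ ≤ _ := htail
    _ ≤ exp (-(ε ^ 2 / (ε + c / 2)) * log n + 1) :=
        exp_le_exp.2 (chernoff_exponent_le hc0.le hε0 (sum_nonneg fun _ _ => by positivity) hmass)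
    _ = exp 1 * (n : ℝ) ^ (-(ε ^ 2 / (ε + c / 2))) := by
        rw [rpow_def_of_pos (by exact_mod_cast hn), mul_comm (log _), exp_add, mul_comm]

/-- Lemma A.2: lower tail for the size of a selection set in
Kingman's coalescent.  Let `c ∈ (0,2)`, `0 < ε ≤ 1 - c/2` and `a = 1 - ε - c/2`.
For each `n`, let `(B_j)` for integers `n^a < j ≤ n` be independent Bernoulli random
variables with `B_j ~ Ber(2/j)`.  Then there is a constant `C > 0` such that for all
sufficiently large `n`, `P(Σ_j B_j ≤ c ln n) ≤ C n^{-ε²/(ε + c/2)}`. -/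
theorem selection_set_lower_tail (c ε : ℝ) (hc0 : 0 < c) (hc2 : c < 2)
    (hε0 : 0 < ε) (hε1 : ε ≤ 1 - c / 2) :
    ∃ C : ℝ, 0 < C ∧ ∃ N : ℕ, ∀ n : ℕ, N ≤ n →
      ∀ (Ω : Type) (_ : MeasurableSpace Ω) (μ : Measure Ω), IsProbabilityMeasure μ →
      ∀ B : ℕ → Ω → Bool,
        (∀ j ∈ (Finset.Icc 1 n).filter
            (fun j : ℕ => (n : ℝ) ^ ((1 : ℝ) - ε - c / 2) < (j : ℝ)), Measurable (B j)) →
        iIndepFun (m := fun _ => ⊤)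
          (fun j : ((Finset.Icc 1 n).filter
              (fun j : ℕ => (n : ℝ) ^ ((1 : ℝ) - ε - c / 2) < (j : ℝ))) => B j) μ →
        (∀ j ∈ (Finset.Icc 1 n).filter
            (fun j : ℕ => (n : ℝ) ^ ((1 : ℝ) - ε - c / 2) < (j : ℝ)),
          μ {ω | B j ω = true} = ENNReal.ofReal (2 / (j : ℝ))) →
        (μ {ω | (∑ j ∈ (Finset.Icc 1 n).filter
              (fun j : ℕ => (n : ℝ) ^ ((1 : ℝ) - ε - c / 2) < (j : ℝ)),
            (if B j ω then (1 : ℝ) else 0)) ≤ c * Real.log n}).toReal ≤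
          C * (n : ℝ) ^ (-(ε ^ 2 / (ε + c / 2))) :=
  selection_set_lower_tail_general c ε hc0 hε0 hε1
end

section
/- For every c ∈ (1,2) there exist β = β(c) > 0 and a constant C > 0 such that for all n ≥ 2, all vertices i ∈ [n], and all real m > c·ln n, the degree of vertex i in the random recursive tree satisfies P(d_{R_n}(i) > m) ≤ C·n^{−β}. In particular any β < 3(c−1)²/(2(c+2)) works. -/
/-!
The degree of `i` is a sum of independent indicators with means `1/j`, so a Chernoff bound gives
`P(d > m) ≤ c^{-m} E[c^d] ≤ c^{-m} exp((c - 1) H_{n-1}) ≤ e^{c-1} n^{-(c log c - (c - 1))}`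
when `m > c log n`. The Padé bound `log c ≥ 3(c² - 1)/(c² + 4c + 1)` then shows that the
Poisson rate `c log c - (c - 1)` is at least `3(c - 1)²/(2(c + 2))`.
-/

open Real Finset

lemma Real.pade_le_log {x : ℝ} (hx : 1 ≤ x) :
    3 * (x ^ 2 - 1) / (x ^ 2 + 4 * x + 1) ≤ log x := by
  let f : ℝ → ℝ := fun y => log y - 3 * (y ^ 2 - 1) / (y ^ 2 + 4 * y + 1)
  have hden : ∀ y : ℝ, 0 < y → 0 < y ^ 2 + 4 * y + 1 := fun y hy => by positivity
  have hf' : ∀ y : ℝ, 0 < y →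
      HasDerivAt f (y⁻¹ - 12 * (y ^ 2 + y + 1) / (y ^ 2 + 4 * y + 1) ^ 2) y := by
    intro y hy
    have := (hasDerivAt_log hy.ne').sub
      ((((hasDerivAt_pow 2 y).sub_const 1).const_mul 3).div
        (((hasDerivAt_pow 2 y).add ((hasDerivAt_id y).const_mul 4)).add_const 1) (hden y hy).ne')
    refine this.congr_deriv ?_
    simp only [Pi.add_apply, id, Nat.cast_ofNat]
    field_simp
    ring
  have hmono : MonotoneOn f (Set.Ici 1) := by
    refine monotoneOn_of_hasDerivWithinAt_nonneg (convex_Ici 1)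
      (fun y hy => (hf' y (by simp at hy; linarith)).continuousAt.continuousWithinAt)
      (fun y hy => (hf' y ?_).hasDerivWithinAt) fun y hy => ?_
    all_goals rw [interior_Ici] at hy
    · exact zero_lt_one.trans hy
    · have hy1 : 1 < y := hy
      have hy0 : 0 < y := zero_lt_one.trans hy1
      -- `f' ≥ 0` reduces to `(y² + 4y + 1)² - 12 y (y² + y + 1) = (y - 1)⁴ ≥ 0`.
      rw [sub_nonneg, div_le_iff₀ (by positivity), inv_mul_eq_div, le_div_iff₀ hy0]
      nlinarith [pow_nonneg (sub_nonneg.mpr hy1.le) 4]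
  simpa [f] using hmono Set.self_mem_Ici hx hx

lemma three_mul_sq_div_le_mul_log_sub {c : ℝ} (hc : 1 ≤ c) :
    3 * (c - 1) ^ 2 / (2 * (c + 2)) ≤ c * log c - (c - 1) := by
  have hc0 : 0 < c := zero_lt_one.trans_le hc
  calc 3 * (c - 1) ^ 2 / (2 * (c + 2))
      ≤ c * (3 * (c ^ 2 - 1) / (c ^ 2 + 4 * c + 1)) - (c - 1) := by
        rw [le_sub_iff_add_le, div_add' _ _ _ (by positivity), mul_div_assoc',
          div_le_div_iff₀ (by positivity) (by positivity)]
        nlinarith [pow_nonneg (sub_nonneg.mpr hc) 3, sq_nonneg c]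
    _ ≤ c * log c - (c - 1) := by gcongr; exact Real.pade_le_log hc

lemma Fintype.card_lt_mul_rpow_le_sum_pow {α : Type*} [Fintype α] (f : α → ℕ) {x : ℝ}
    (hx : 1 ≤ x) (m : ℝ) : (Nat.card {a // m < f a} : ℝ) * x ^ m ≤ ∑ a, x ^ f a := by
  classical
  rw [Nat.card_eq_fintype_card, Fintype.card_subtype, ← nsmul_eq_mul]
  calc #{a | m < (f a : ℝ)} • x ^ m ≤ ∑ a ∈ {a | m < (f a : ℝ)}, x ^ f a := by
        refine card_nsmul_le_sum _ _ _ fun a ha => ?_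
        rw [← rpow_natCast]
        exact rpow_le_rpow_of_exponent_le hx (mem_filter.1 ha).2.le
    _ ≤ ∑ a, x ^ f a :=
        sum_le_sum_of_subset_of_nonneg (filter_subset _ _) fun _ _ _ => by positivity

lemma Fin.sum_pow_ite_val_eq (N a : ℕ) (x : ℝ) :
    ∑ v : Fin N, x ^ (if (v : ℕ) = a then 1 else 0) = N + if a < N then x - 1 else 0 := by
  rw [Fin.sum_univ_eq_sum_range (fun k => x ^ (if k = a then 1 else 0))]
  calc ∑ k ∈ range N, x ^ (if k = a then 1 else 0)
      = ∑ k ∈ range N, (1 + if k = a then x - 1 else 0) :=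
        sum_congr rfl fun k _ => by split_ifs <;> ring
    _ = N + if a < N then x - 1 else 0 := by
        simp [sum_add_distrib, sum_ite_eq']

section RecursiveTree

variable {n : ℕ}

lemma rDeg_eq_sum (t : RecTree n) (i : Fin n) :
    rDeg t i = ∑ j, if (t j : ℕ) = i then 1 else 0 := by
  rw [rDeg, Nat.card_eq_fintype_card, Fintype.card_subtype, card_filter]

lemma card_recTree (n : ℕ) :
    (Nat.card (RecTree n) : ℝ) = ∏ j : Fin (n - 1), ((j : ℝ) + 1) := by
  rw [Nat.card_eq_fintype_card, Fintype.card_pi]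
  push_cast
  simp

lemma sum_pow_rDeg (x : ℝ) (i : Fin n) :
    ∑ t : RecTree n, x ^ rDeg t i =
      ∏ j : Fin (n - 1), ∑ v : Fin (j + 1), x ^ (if (v : ℕ) = i then 1 else 0) := by
  rw [Fintype.prod_sum]
  exact sum_congr rfl fun t _ => by rw [rDeg_eq_sum, prod_pow_eq_pow_sum]

lemma sum_pow_rDeg_div_card_le {x : ℝ} (hx : 1 ≤ x) (i : Fin n) :
    (∑ t : RecTree n, x ^ rDeg t i) / Nat.card (RecTree n) ≤
      exp ((x - 1) * harmonic (n - 1)) := by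
  have hH : (harmonic (n - 1) : ℝ) = ∑ j : Fin (n - 1), ((j : ℝ) + 1)⁻¹ := by
    rw [harmonic, Fin.sum_univ_eq_sum_range (fun j => ((j : ℝ) + 1)⁻¹)]
    push_cast
    rfl
  rw [sum_pow_rDeg, card_recTree, ← prod_div_distrib, hH, mul_sum, exp_sum]
  refine prod_le_prod (fun j _ => by positivity) fun j _ => ?_
  calc (∑ v : Fin (j + 1), x ^ (if (v : ℕ) = i then 1 else 0)) / ((j : ℝ) + 1)
      ≤ ((j : ℝ) + 1 + (x - 1)) / ((j : ℝ) + 1) := by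
        rw [Fin.sum_pow_ite_val_eq]
        push_cast
        gcongr
        split_ifs <;> linarith
    _ = 1 + (x - 1) * ((j : ℝ) + 1)⁻¹ := by field_simp
    _ ≤ exp ((x - 1) * ((j : ℝ) + 1)⁻¹) := by
        linarith [add_one_le_exp ((x - 1) * ((j : ℝ) + 1)⁻¹)]

theorem rProb_lt_rDeg_le {x : ℝ} (hx : 1 ≤ x) (i : Fin n) (m : ℝ) :
    rProb n {t | m < (rDeg t i : ℝ)} ≤ exp ((x - 1) * harmonic (n - 1) - m * log x) := by
  have hN : (0 : ℝ) < Nat.card (RecTree n) := by exact_mod_cast Nat.card_pos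
  rw [rProb, exp_sub, mul_comm m, ← rpow_def_of_pos (zero_lt_one.trans_le hx),
    div_le_div_iff₀ hN (by positivity)]
  calc (Nat.card {t : RecTree n // m < (rDeg t i : ℝ)} : ℝ) * x ^ m
      ≤ ∑ t : RecTree n, x ^ rDeg t i :=
        Fintype.card_lt_mul_rpow_le_sum_pow (rDeg · i) hx m
    _ ≤ exp ((x - 1) * harmonic (n - 1)) * Nat.card (RecTree n) :=
        (div_le_iff₀ hN).1 (sum_pow_rDeg_div_card_le hx i)

end RecursiveTree

theorem recursive_tree_degree_tail_general (c : ℝ) (hc1 : 1 < c)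
    (β : ℝ) (hβ : β < 3 * (c - 1) ^ 2 / (2 * (c + 2))) :
    ∃ C > 0, ∀ n : ℕ, 2 ≤ n → ∀ i : Fin n, ∀ m : ℝ, c * Real.log n < m →
      rProb n {t | m < (rDeg t i : ℝ)} ≤ C * (n : ℝ) ^ (-β) := by
  refine ⟨exp (c - 1), exp_pos _, fun n hn i m hm => ?_⟩
  have hn0 : (0 : ℝ) < n := by exact_mod_cast i.pos
  have hlogn : 0 ≤ log n := log_natCast_nonneg n
  have hH : (harmonic (n - 1) : ℝ) ≤ 1 + log n :=
    (harmonic_le_one_add_log (n - 1)).trans <| by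
      gcongr
      · exact_mod_cast (by omega : 0 < n - 1)
      · exact Nat.sub_le n 1
  have hrate := three_mul_sq_div_le_mul_log_sub hc1.le
  have hm' : c * log n * log c ≤ m * log c := by gcongr; exact (log_pos hc1).le
  have hβ' : β * log n ≤ (c * log c - (c - 1)) * log n := by gcongr; linarith
  have hH' : (c - 1) * harmonic (n - 1) ≤ (c - 1) * (1 + log n) := by gcongr
  calc rProb n {t | m < (rDeg t i : ℝ)}
      ≤ exp ((c - 1) * harmonic (n - 1) - m * log c) := rProb_lt_rDeg_le hc1.le i m
    _ ≤ exp ((c - 1) + log n * -β) := exp_le_exp.2 (by linarith)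
    _ = exp (c - 1) * n ^ (-β) := by rw [exp_add, rpow_def_of_pos hn0]

/-- tail bound for vertex degrees, cf. (5.1).
For every `c ∈ (1,2)` and every `0 < β < 3(c-1)²/(2(c+2))` there is a constant `C > 0`
such that for all `n ≥ 2`, all vertices `i` and all real `m > c ln n`,
`P(d_{R_n}(i) > m) ≤ C n^{-β}`. -/
theorem recursive_tree_degree_tail (c : ℝ) (hc1 : 1 < c) (hc2 : c < 2)
    (β : ℝ) (hβ0 : 0 < β) (hβ : β < 3 * (c - 1) ^ 2 / (2 * (c + 2))) :
    ∃ C > 0, ∀ n : ℕ, 2 ≤ n → ∀ i : Fin n, ∀ m : ℝ, c * Real.log n < m →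
      rProb n {t | m < (rDeg t i : ℝ)} ≤ C * (n : ℝ) ^ (-β) :=
  recursive_tree_degree_tail_general c hc1 β hβ
end
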